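/- arXiv:2207.05262 — 5 statements merged into one kernel-verified Lean document; each statement's English description precedes it below -/
import Mathlib

section
/- Let P be a finite linearly ordered set, let 𝓑 be a collection of nonempty subsets of P, let Γ be an abelian group, and let f : 2^P → Γ be a function such that for every B ∈ 𝓑 and every A ⊇ B we have f(A) = f(A \ {max B}), where max B is the maximum element of B. Then ∑_{A ⊆ P} (-1)^{|A|} f(A) = ∑_{A ∈ 2^P \ 𝓑⁻} (-1)^{|A|} f(A), where 𝓑⁻ = {A ⊆ P : A ⊇ B \ {max B} for some B ∈ 𝓑}. -/
open scoped Classical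

/-- Dohmen–Trink broken-circuit-type lemma: if `f A = f (A \ {max B})` whenever `B ∈ 𝓑`
and `B ⊆ A`, then the alternating sum of `f` over all subsets of `P` equals the
alternating sum restricted to subsets not containing any `B \ {max B}` for `B ∈ 𝓑`. -/
theorem stmt_0 {P : Type*} [Fintype P] [LinearOrder P] {Γ : Type*} [AddCommGroup Γ]
    (𝓑 : Finset (Finset P)) (h𝓑 : ∀ B ∈ 𝓑, B.Nonempty)
    (f : Finset P → Γ)
    (hf : ∀ B, ∀ hB : B ∈ 𝓑, ∀ A : Finset P, B ⊆ A →
      f A = f (A.erase (B.max' (h𝓑 B hB)))) :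
    ∑ A : Finset P, (-1 : ℤ) ^ A.card • f A =
      ∑ A ∈ Finset.univ.filter
          (fun A : Finset P => ¬ ∃ B, ∃ hB : B ∈ 𝓑, B.erase (B.max' (h𝓑 B hB)) ⊆ A),
        (-1 : ℤ) ^ A.card • f A := by
  classical
  have key : ∀ n (𝓑 : Finset (Finset P)) (h𝓑 : ∀ B ∈ 𝓑, B.Nonempty),
      (∀ B, ∀ hB : B ∈ 𝓑, ∀ A : Finset P, B ⊆ A →
        f A = f (A.erase (B.max' (h𝓑 B hB)))) →
      𝓑.card = n →
      ∑ A ∈ Finset.univ.filter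
          (fun A : Finset P => ∃ B, ∃ hB : B ∈ 𝓑, B.erase (B.max' (h𝓑 B hB)) ⊆ A),
        (-1 : ℤ) ^ A.card • f A = 0 := by
    intro n
    induction n with
    | zero =>
      intro 𝓑 h𝓑 hf hc
      rw [Finset.card_eq_zero] at hc
      subst hc
      simp
    | succ n ih =>
      intro 𝓑 h𝓑 hf hc
      have hne : 𝓑.Nonempty := Finset.card_pos.mp (by omega)
      obtain ⟨B0, hB0, hmax⟩ := Finset.exists_max_image 𝓑 Finset.max hne
      set b0 := B0.max' (h𝓑 B0 hB0) with hb0def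
      have hb0 : ∀ B (hB : B ∈ 𝓑), B.max' (h𝓑 B hB) ≤ b0 := by
        intro B hB
        have h1 := hmax B hB
        rw [← Finset.coe_max' (h𝓑 B hB), ← Finset.coe_max' (h𝓑 B0 hB0)] at h1
        exact_mod_cast h1
      set C0 := B0.erase b0 with hC0def
      set 𝓑' := 𝓑.erase B0 with h𝓑'def
      have h𝓑' : ∀ B ∈ 𝓑', B.Nonempty := fun B hB => h𝓑 B (Finset.mem_of_mem_erase hB)
      have hmem : ∀ B, B ∈ 𝓑' → B ∈ 𝓑 := fun B hB => Finset.mem_of_mem_erase hB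
      have hf' : ∀ B, ∀ hB : B ∈ 𝓑', ∀ A : Finset P, B ⊆ A →
          f A = f (A.erase (B.max' (h𝓑' B hB))) := fun B hB A hBA => hf B (hmem B hB) A hBA
      have hc' : 𝓑'.card = n := by
        rw [h𝓑'def, Finset.card_erase_of_mem hB0, hc]; omega
      -- predicate rewriting
      have hpred : ∀ A : Finset P,
          (∃ B, ∃ hB : B ∈ 𝓑, B.erase (B.max' (h𝓑 B hB)) ⊆ A) ↔
          ((∃ B, ∃ hB : B ∈ 𝓑', B.erase (B.max' (h𝓑' B hB)) ⊆ A) ∨ C0 ⊆ A) := by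
        intro A
        constructor
        · rintro ⟨B, hB, hsub⟩
          by_cases hEq : B = B0
          · subst hEq; right; exact hsub
          · left; exact ⟨B, Finset.mem_erase.mpr ⟨hEq, hB⟩, hsub⟩
        · rintro (⟨B, hB, hsub⟩ | hsub)
          · exact ⟨B, hmem B hB, hsub⟩
          · exact ⟨B0, hB0, hsub⟩
      have hfeq : (Finset.univ.filter
          (fun A : Finset P => ∃ B, ∃ hB : B ∈ 𝓑, B.erase (B.max' (h𝓑 B hB)) ⊆ A))
          = (Finset.univ.filter
          (fun A : Finset P => (∃ B, ∃ hB : B ∈ 𝓑', B.erase (B.max' (h𝓑' B hB)) ⊆ A) ∨ C0 ⊆ A)) := by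
        ext A
        simp only [Finset.mem_filter, Finset.mem_univ, true_and]
        exact hpred A
      rw [hfeq]
      -- split the filter
      have hsplit : (Finset.univ.filter
          (fun A : Finset P => (∃ B, ∃ hB : B ∈ 𝓑', B.erase (B.max' (h𝓑' B hB)) ⊆ A) ∨ C0 ⊆ A))
          = (Finset.univ.filter
              (fun A : Finset P => ∃ B, ∃ hB : B ∈ 𝓑', B.erase (B.max' (h𝓑' B hB)) ⊆ A))
            ∪ (Finset.univ.filter
              (fun A : Finset P => C0 ⊆ A ∧
                ¬ ∃ B, ∃ hB : B ∈ 𝓑', B.erase (B.max' (h𝓑' B hB)) ⊆ A)) := by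
        ext A
        simp only [Finset.mem_filter, Finset.mem_union, Finset.mem_univ, true_and]
        constructor
        · rintro (h | h)
          · exact Or.inl h
          · by_cases h2 : ∃ B, ∃ hB : B ∈ 𝓑', B.erase (B.max' (h𝓑' B hB)) ⊆ A
            · exact Or.inl h2
            · exact Or.inr ⟨h, h2⟩
        · rintro (h | ⟨h1, _⟩)
          · exact Or.inl h
          · exact Or.inr h1
      have hdisj : Disjoint
          (Finset.univ.filter
              (fun A : Finset P => ∃ B, ∃ hB : B ∈ 𝓑', B.erase (B.max' (h𝓑' B hB)) ⊆ A))
          (Finset.univ.filter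
              (fun A : Finset P => C0 ⊆ A ∧
                ¬ ∃ B, ∃ hB : B ∈ 𝓑', B.erase (B.max' (h𝓑' B hB)) ⊆ A)) := by
        rw [Finset.disjoint_left]
        intro A hA hA'
        simp only [Finset.mem_filter] at hA hA'
        exact hA'.2.2 hA.2
      rw [hsplit, Finset.sum_union hdisj, ih 𝓑' h𝓑' hf' hc', zero_add]
      -- the involution
      have hb0notC0 : b0 ∉ C0 := Finset.notMem_erase _ _
      have hB0sub : ∀ A : Finset P, C0 ⊆ A → b0 ∈ A → B0 ⊆ A := by
        intro A hC hb x hx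
        by_cases hxb : x = b0
        · subst hxb; exact hb
        · exact hC (Finset.mem_erase.mpr ⟨hxb, hx⟩)
      refine Finset.sum_involution
        (fun A _ => if b0 ∈ A then A.erase b0 else insert b0 A) ?_ ?_ ?_ ?_
      · -- cancellation
        intro A hA
        simp only [Finset.mem_filter, Finset.mem_univ, true_and] at hA
        by_cases hb : b0 ∈ A
        · simp only [hb, if_true]
          have hfe : f A = f (A.erase b0) := hf B0 hB0 A (hB0sub A hA.1 hb)
          have hcard : A.card = (A.erase b0).card + 1 := by
            rw [Finset.card_erase_of_mem hb]
            have : 1 ≤ A.card := Finset.card_pos.mpr ⟨b0, hb⟩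
            omega
          rw [hfe, hcard, pow_succ]
          ring_nf
          simp [add_neg_cancel]
        · simp only [hb, if_false]
          have hfe : f (insert b0 A) = f A := by
            have := hf B0 hB0 (insert b0 A)
              (fun x hx => by
                by_cases hxb : x = b0
                · subst hxb; exact Finset.mem_insert_self _ _
                · exact Finset.mem_insert_of_mem (hA.1 (Finset.mem_erase.mpr ⟨hxb, hx⟩)))
            rwa [Finset.erase_insert hb] at this
          have hcard : (insert b0 A).card = A.card + 1 := Finset.card_insert_of_notMem hb
          rw [hfe, hcard, pow_succ]
          ring_nf
          simp [add_neg_cancel]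
      · -- g ≠ id
        intro A hA _
        by_cases hb : b0 ∈ A
        · simp only [hb, if_true]
          intro h
          have h2 := Finset.notMem_erase b0 A
          rw [h] at h2
          exact h2 hb
        · simp only [hb, if_false]
          intro h
          exact hb (h ▸ Finset.mem_insert_self b0 A)
      · -- g mem
        intro A hA
        simp only [Finset.mem_filter, Finset.mem_univ, true_and] at hA ⊢
        obtain ⟨hC, hbad⟩ := hA
        by_cases hb : b0 ∈ A
        · simp only [hb, if_true]
          refine ⟨fun x hx => Finset.mem_erase.mpr ⟨fun h => hb0notC0 (h ▸ hx), hC hx⟩, ?_⟩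
          rintro ⟨B, hB, hsub⟩
          exact hbad ⟨B, hB, hsub.trans (Finset.erase_subset _ _)⟩
        · simp only [hb, if_false]
          refine ⟨hC.trans (Finset.subset_insert _ _), ?_⟩
          rintro ⟨B, hB, hsub⟩
          apply hbad
          refine ⟨B, hB, fun x hx => ?_⟩
          have hxA : x ∈ insert b0 A := hsub hx
          rcases Finset.mem_insert.mp hxA with hxb | hxA
          · exfalso
            subst hxb
            -- x = b0 ∈ B.erase (max' B), so b0 < max' B ≤ b0
            have h1 : b0 ≠ B.max' (h𝓑' B hB) := (Finset.mem_erase.mp hx).1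
            have h2 : b0 ≤ B.max' (h𝓑' B hB) :=
              Finset.le_max' B b0 (Finset.mem_of_mem_erase hx)
            have h3 : B.max' (h𝓑' B hB) ≤ b0 := by
              have := hb0 B (hmem B hB)
              convert this using 2
            exact h1 (le_antisymm h2 h3)
          · exact hxA
      · -- involutive
        intro A hA
        by_cases hb : b0 ∈ A
        · simp [hb, Finset.notMem_erase, Finset.insert_erase]
        · simp [hb, Finset.mem_insert_self, Finset.erase_insert]
  have hzero := key 𝓑.card 𝓑 h𝓑 hf rfl
  rw [← Finset.sum_filter_add_sum_filter_not Finset.univ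
    (fun A : Finset P => ¬ ∃ B, ∃ hB : B ∈ 𝓑, B.erase (B.max' (h𝓑 B hB)) ⊆ A)
    (fun A => (-1 : ℤ) ^ A.card • f A)]
  simp only [not_not]
  rw [hzero, add_zero]
end

section
/- For a connected signed graph (G, σ), the following are equivalent: (i) every cycle of (G, σ) contains an even number of negative edges (balanced); (ii) (G, σ) can be obtained from the all-positive signing (G, 1) by a switching at some vertex subset X (i.e., reversing the signs of all edges with exactly one endpoint in X). -/
open scoped Classical

variable {V : Type} [Fintype V] [LinearOrder V]

def walkSign (σ : V → V → ℤ) {G : SimpleGraph V} {u v : V} (w : G.Walk u v) : ℤ :=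
  (w.darts.map fun d => σ d.toProd.1 d.toProd.2).prod

def BalancedCompAt (G : SimpleGraph V) (σ : V → V → ℤ) (v : V) : Prop :=
  ∀ u : V, G.Reachable v u → ∀ w : G.Walk u u, w.IsCycle → walkSign σ w = 1

def IsCompRep (G : SimpleGraph V) (v : V) : Prop :=
  ∀ u : V, G.Reachable v u → v ≤ u

def sideNeg (G : SimpleGraph V) (σ : V → V → ℤ) (v u : V) : Prop :=
  ∃ w : G.Walk v u, walkSign σ w = -1

noncomputable def beta (G : SimpleGraph V) (σ : V → V → ℤ) (L : V → Finset ℤ) (v : V) : ℕ :=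
  Set.ncard {a : ℤ | ∀ u : V, G.Reachable v u →
    (if sideNeg G σ v u then -a ∈ L u else a ∈ L u)}

noncomputable def gamma (G : SimpleGraph V) (σ : V → V → ℤ) (L : V → Finset ℤ) : ℤ :=
  if ∀ v : V, ¬ BalancedCompAt G σ v → (0 : ℤ) ∈ L v then 1 else 0

noncomputable def prodBeta (G : SimpleGraph V) (σ : V → V → ℤ) (L : V → Finset ℤ) : ℤ :=
  ∏ v : V, if IsCompRep G v ∧ BalancedCompAt G σ v then (beta G σ L v : ℤ) else 1

noncomputable def numColorings (G : SimpleGraph V) (σ : V → V → ℤ) (L : V → Finset ℤ) : ℕ :=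
  Set.ncard {c : V → ℤ | (∀ v, c v ∈ L v) ∧ ∀ u w, G.Adj u w → c u ≠ σ u w * c w}

def subOf (F : Finset (Sym2 V)) : SimpleGraph V := SimpleGraph.fromEdgeSet ↑F

noncomputable def Mset (k : ℕ) : Finset ℤ :=
  if Even k then (Finset.Icc (-((k / 2 : ℕ) : ℤ)) ((k / 2 : ℕ) : ℤ)).erase 0
  else Finset.Icc (-((k / 2 : ℕ) : ℤ)) ((k / 2 : ℕ) : ℤ)

noncomputable def edgeFS (G : SimpleGraph V) : Finset (Sym2 V) := G.edgeSet.toFinset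

def IsBalancedCycle (G : SimpleGraph V) (σ : V → V → ℤ) (C : Finset (Sym2 V)) : Prop :=
  ∃ (v : V) (w : G.Walk v v), w.IsCycle ∧ walkSign σ w = 1 ∧ C = w.edges.toFinset

def IsBarbell (G : SimpleGraph V) (σ : V → V → ℤ) (C : Finset (Sym2 V)) : Prop :=
  ∃ (v₁ v₂ : V) (w₁ : G.Walk v₁ v₁) (w₂ : G.Walk v₂ v₂) (p : G.Walk v₁ v₂),
    w₁.IsCycle ∧ w₂.IsCycle ∧ p.IsPath ∧
    walkSign σ w₁ = -1 ∧ walkSign σ w₂ = -1 ∧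
    (∀ x ∈ w₁.support, x ≠ v₁ → x ∉ p.support ∧ x ∉ w₂.support) ∧
    (∀ x ∈ w₂.support, x ≠ v₂ → x ∉ p.support ∧ x ∉ w₁.support) ∧
    C = w₁.edges.toFinset ∪ w₂.edges.toFinset ∪ p.edges.toFinset

def IsCircuit (G : SimpleGraph V) (σ : V → V → ℤ) (C : Finset (Sym2 V)) : Prop :=
  IsBalancedCycle G σ C ∨ IsBarbell G σ C

def IsBrokenCircuit [LinearOrder (Sym2 V)] (G : SimpleGraph V) (σ : V → V → ℤ)
    (B : Finset (Sym2 V)) : Prop :=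
  ∃ (C : Finset (Sym2 V)) (hC : C.Nonempty), IsCircuit G σ C ∧ B = C.erase (C.max' hC)

def BCFree [LinearOrder (Sym2 V)] (G : SimpleGraph V) (σ : V → V → ℤ)
    (F : Finset (Sym2 V)) : Prop :=
  ∀ B : Finset (Sym2 V), IsBrokenCircuit G σ B → ¬ B ⊆ F

noncomputable def nbcSets [LinearOrder (Sym2 V)] (G : SimpleGraph V) (σ : V → V → ℤ)
    (i : ℕ) : Finset (Finset (Sym2 V)) :=
  (edgeFS G).powerset.filter fun F => F.card = i ∧ BCFree G σ F

section AuxSwitching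
open SimpleGraph
variable {G : SimpleGraph V} {σ : V → V → ℤ}

lemma walkSign_nil {u : V} : walkSign σ (Walk.nil : G.Walk u u) = 1 := rfl

lemma walkSign_cons {u v w : V} (h : G.Adj u v) (p : G.Walk v w) :
    walkSign σ (Walk.cons h p) = σ u v * walkSign σ p := by
  simp [walkSign]

lemma walkSign_append {u v w : V} (p : G.Walk u v) (q : G.Walk v w) :
    walkSign σ (p.append q) = walkSign σ p * walkSign σ q := by
  simp [walkSign, Walk.darts_append]

lemma walkSign_reverse (hsym : ∀ u v, σ u v = σ v u) {u v : V} (p : G.Walk u v) :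
    walkSign σ p.reverse = walkSign σ p := by
  induction p with
  | nil => rfl
  | cons h p ih =>
    rw [Walk.reverse_cons, walkSign_append, walkSign_cons, walkSign_cons, walkSign_nil, ih,
      hsym]
    ring

lemma walkSign_concat {u v w : V} (p : G.Walk u v) (h : G.Adj v w) :
    walkSign σ (p.concat h) = walkSign σ p * σ v w := by
  rw [Walk.concat_eq_append, walkSign_append, walkSign_cons, walkSign_nil]
  ring

lemma walkSign_pm (hsign : ∀ u v, G.Adj u v → σ u v = 1 ∨ σ u v = -1)
    {u v : V} (p : G.Walk u v) : walkSign σ p = 1 ∨ walkSign σ p = -1 := by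
  induction p with
  | nil => left; rfl
  | cons h p ih =>
    rw [walkSign_cons]
    rcases hsign _ _ h with h1 | h1 <;> rcases ih with h2 | h2 <;> simp [h1, h2]

set_option linter.unusedSectionVars false

lemma nodup_closed_nil {u : V} (q : G.Walk u u) (hq : q.support.Nodup) : q = Walk.nil := by
  cases q with
  | nil => rfl
  | cons h p =>
    exfalso
    rw [Walk.support_cons] at hq
    exact (List.nodup_cons.mp hq).1 p.end_mem_support

lemma path_edge_sign {u v : V} (p : G.Walk v u) (hp : p.support.Nodup)
    (he : s(u, v) ∈ p.edges) : walkSign σ p = σ v u := by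
  induction p with
  | nil => simp at he
  | @cons v w' u h' q ih =>
    rw [Walk.edges_cons, List.mem_cons] at he
    rw [Walk.support_cons, List.nodup_cons] at hp
    rcases he with he | he
    · rw [Sym2.eq_iff] at he
      rcases he with ⟨h1, h2⟩ | ⟨h1, h2⟩
      · subst h1; subst h2; exact absurd rfl h'.ne
      · subst h1
        have : q = Walk.nil := nodup_closed_nil q hp.2
        subst this
        rw [walkSign_cons, walkSign_nil, mul_one]
    · exact absurd (q.snd_mem_support_of_mem_edges he) hp.1


lemma split_closed {x u : V} (d : G.Walk x u) (hxd : x ∈ d.support.tail) :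
    ∃ (c : G.Walk x x) (r : G.Walk x u), walkSign σ d = walkSign σ c * walkSign σ r ∧
      d.length = c.length + r.length ∧ 1 ≤ c.length := by
  cases d with
  | nil => simp at hxd
  | @cons _ y _ h2 d2 =>
    rw [Walk.support_cons, List.tail_cons] at hxd
    refine ⟨Walk.cons h2 (d2.takeUntil x hxd), d2.dropUntil x hxd, ?_, ?_, ?_⟩
    · conv_lhs => rw [← d2.take_spec hxd]
      rw [walkSign_cons, walkSign_cons, walkSign_append]
      ring
    · conv_lhs => rw [← d2.take_spec hxd]
      rw [Walk.length_cons, Walk.length_append, Walk.length_cons]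
      omega
    · rw [Walk.length_cons]
      omega

lemma closed_walk_sign (hsym : ∀ u v, σ u v = σ v u)
    (hsign : ∀ u v, G.Adj u v → σ u v = 1 ∨ σ u v = -1)
    (hbal : ∀ (v : V) (w : G.Walk v v), w.IsCycle → walkSign σ w = 1)
    {u : V} (w : G.Walk u u) : walkSign σ w = 1 := by
  suffices H : ∀ n : ℕ, ∀ (u : V) (w : G.Walk u u), w.length = n → walkSign σ w = 1 from
    H w.length u w rfl
  intro n
  induction n using Nat.strong_induction_on with
  | _ n IH =>
    intro u w hw
    cases w with
    | nil => rfl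
    | @cons _ v _ h p =>
      by_cases hnd : p.support.Nodup
      · by_cases he : s(u, v) ∈ p.edges
        · rw [walkSign_cons, path_edge_sign p hnd he, hsym u v]
          rcases hsign _ _ h with h1 | h1 <;> rw [hsym u v] at h1 <;> rw [h1] <;> norm_num
        · exact hbal _ _ ((Walk.cons_isCycle_iff p h).mpr ⟨(Walk.isPath_def p).mpr hnd, he⟩)
      · -- find a repeated vertex and split
        obtain ⟨x, hx2⟩ : ∃ x, ¬ p.support.count x ≤ 1 := by
          by_contra hc
          push_neg at hc
          exact hnd (List.nodup_iff_count_le_one.mpr hc)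
        have hx : x ∈ p.support := by
          rw [← List.count_pos_iff]; omega
        have hspec := p.take_spec hx
        set t := p.takeUntil x hx with ht
        set d := p.dropUntil x hx with hd
        have hct : t.support.count x = 1 := p.count_support_takeUntil_eq_one hx
        have hxd : x ∈ d.support.tail := by
          have : p.support.count x = t.support.count x + d.support.tail.count x := by
            conv_lhs => rw [← hspec]
            rw [Walk.support_append, List.count_append]
          rw [← List.count_pos_iff]
          omega
        obtain ⟨c, r, hsgn, hlen, hc1⟩ := split_closed d hxd
        have hsplit : walkSign σ (Walk.cons h p) =
            walkSign σ c * walkSign σ (Walk.cons h (t.append r)) := by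
          conv_lhs => rw [← hspec]
          rw [walkSign_cons, walkSign_cons, walkSign_append, walkSign_append, hsgn]
          ring
        have hlp : p.length = t.length + d.length := by
          conv_lhs => rw [← hspec]
          simp [Walk.length_append]
        rw [Walk.length_cons] at hw
        rw [hsplit, IH c.length (by omega) _ _ rfl,
          IH (Walk.cons h (t.append r)).length
            (by rw [Walk.length_cons, Walk.length_append]; omega) _ _ rfl, one_mul]

end AuxSwitching

/-- A connected signed graph is balanced iff it is switching-equivalent to the
all-positive signing. -/
theorem stmt_1 (G : SimpleGraph V) (σ : V → V → ℤ)
    (hconn : G.Connected)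
    (hsym : ∀ u v, σ u v = σ v u)
    (hsign : ∀ u v, G.Adj u v → σ u v = 1 ∨ σ u v = -1) :
    (∀ (v : V) (w : G.Walk v v), w.IsCycle → walkSign σ w = 1) ↔
      ∃ X : Set V, ∀ u v, G.Adj u v →
        σ u v = if (u ∈ X ↔ v ∈ X) then 1 else -1 := by
  constructor
  · intro hbal
    have hne : Nonempty V := hconn.nonempty
    let v0 : V := Classical.arbitrary V
    let pw : ∀ u : V, G.Walk v0 u := fun u => Classical.choice (hconn.preconnected v0 u)
    refine ⟨{u | walkSign σ (pw u) = -1}, ?_⟩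
    intro u v h
    have key := closed_walk_sign hsym hsign hbal (((pw v).concat h.symm).append (pw u).reverse)
    rw [walkSign_append, walkSign_concat, walkSign_reverse hsym] at key
    have hpu := walkSign_pm hsign (pw u)
    have hpv := walkSign_pm hsign (pw v)
    have hσ : σ u v = walkSign σ (pw u) * walkSign σ (pw v) := by
      rw [hsym u v]
      rcases hpu with h1 | h1 <;> rcases hpv with h2 | h2 <;>
        rw [h1, h2] at key ⊢ <;> linarith
    rw [hσ]
    rcases hpu with h1 | h1 <;> rcases hpv with h2 | h2 <;>
      norm_num [Set.mem_setOf_eq, h1, h2]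
  · rintro ⟨X, hX⟩ v w _
    let f : V → ℤ := fun x => if x ∈ X then -1 else 1
    have hf2 : ∀ x, f x * f x = 1 := by
      intro x; by_cases h : x ∈ X <;> simp [f, h]
    have hedge : ∀ u v, G.Adj u v → σ u v = f u * f v := by
      intro u v h
      rw [hX u v h]
      by_cases hu : u ∈ X <;> by_cases hv : v ∈ X <;> simp [f, hu, hv]
    have hwalk : ∀ (a b : V) (p : G.Walk a b), walkSign σ p = f a * f b := by
      intro a b p
      induction p with
      | nil => rw [walkSign_nil]; exact (hf2 _).symm
      | @cons a c b h p ih =>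
        rw [walkSign_cons, hedge _ _ h, ih]
        calc (f a * f c) * (f c * f b) = f a * f b * (f c * f c) := by ring
          _ = f a * f b := by rw [hf2, mul_one]
    rw [hwalk]
    exact hf2 v
end

section
/- Let Σ be a signed graph, F ⊆ E(Σ), and let C ⊆ F be the edge set of a balanced cycle with maximum edge e (under a fixed linear order on E(Σ)). If the component T₁ of ⟨F⟩ containing C is unbalanced, then the component of ⟨F \ {e}⟩ containing C \ {e} is also unbalanced; moreover every vertex lies in an unbalanced component of ⟨F \ {e}⟩ if and only if it lies in an unbalanced component of ⟨F⟩. -/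
open scoped Classical

variable {V : Type} [Fintype V] [LinearOrder V]

section Stmt8Helpers

open SimpleGraph

variable {σ : V → V → ℤ}

lemma ws_nil {H : SimpleGraph V} {u : V} : walkSign σ (Walk.nil : H.Walk u u) = 1 := rfl

lemma ws_cons {H : SimpleGraph V} {a b c : V} (h : H.Adj a b) (p : H.Walk b c) :
    walkSign σ (Walk.cons h p) = σ a b * walkSign σ p := by
  simp [walkSign, Walk.darts_cons]

lemma ws_append {H : SimpleGraph V} {a b c : V} (p : H.Walk a b) (q : H.Walk b c) :
    walkSign σ (p.append q) = walkSign σ p * walkSign σ q := by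
  simp [walkSign, Walk.darts_append]

lemma ws_reverse {H : SimpleGraph V} (hsym : ∀ a b, σ a b = σ b a) {a b : V}
    (p : H.Walk a b) : walkSign σ p.reverse = walkSign σ p := by
  induction p with
  | nil => rfl
  | cons h q ih =>
    rename_i x y z
    rw [Walk.reverse_cons, ws_append, ih, ws_cons, ws_cons, ws_nil, hsym x y]
    ring

lemma ws_transfer {H K : SimpleGraph V} {a b : V} (p : H.Walk a b)
    (hp : ∀ e ∈ p.edges, e ∈ K.edgeSet) :
    walkSign σ (p.transfer K hp) = walkSign σ p := by
  induction p with
  | nil => rfl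
  | cons h q ih =>
    simp only [Walk.transfer]
    exact (ws_cons _ _).trans (congrArg _ (ih _))

lemma ws_rotate {H : SimpleGraph V} {u v : V} (c : H.Walk v v) (h : u ∈ c.support) :
    walkSign σ (c.rotate u h) = walkSign σ c := by
  unfold walkSign
  exact List.Perm.prod_eq (((Walk.rotate_darts c u h).map _).perm)

lemma dart_fst_ne_end {H : SimpleGraph V} {a b : V} (p : H.Walk a b)
    (hnd : p.support.Nodup) {d : H.Dart} (hd : d ∈ p.darts) : d.fst ≠ b := by
  induction p with
  | nil => simp at hd
  | @cons x m y' h q ih =>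
    rw [Walk.support_cons, List.nodup_cons] at hnd
    rcases List.mem_cons.mp (by simpa [Walk.darts_cons] using hd) with rfl | hd'
    · intro hab
      exact hnd.1 (by rw [show x = y' from hab]; exact q.end_mem_support)
    · exact ih hnd.2 hd'

lemma closed_nodup_eq_nil {H : SimpleGraph V} {y : V} (q : H.Walk y y)
    (h : q.support.Nodup) : q = Walk.nil := by
  cases q with
  | nil => rfl
  | cons h' s =>
    rw [Walk.support_cons, List.nodup_cons] at h
    exact absurd s.end_mem_support h.1

lemma closedWalkSign {H : SimpleGraph V} {σ : V → V → ℤ}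
    (hunit : ∀ a b, H.Adj a b → σ a b * σ b a = 1) {u : V}
    (hbal : BalancedCompAt H σ u) :
    ∀ n y, H.Reachable u y → ∀ p : H.Walk y y, p.length = n → walkSign σ p = 1 := by
  intro n
  induction n using Nat.strong_induction_on with
  | _ n ih =>
  intro y hy p hl
  cases p with
  | nil => rfl
  | cons h r =>
    rename_i z
    subst hl
    have hyend : y ∈ r.support := r.end_mem_support
    by_cases h0 : (r.dropUntil y hyend).length = 0
    · -- the end `y` occurs in `r` only as its final vertex
      have hcount : r.support.count y = 1 := by
        have hspec := r.take_spec hyend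
        have h1 : (r.takeUntil y hyend).support.count y = 1 :=
          r.count_support_takeUntil_eq_one hyend
        have h2 : r.support
            = (r.takeUntil y hyend).support ++ (r.dropUntil y hyend).support.tail := by
          rw [← Walk.support_append, hspec]
        have h3 : (r.dropUntil y hyend).support.tail = [] := by
          have h4 := (r.dropUntil y hyend).length_support
          rw [h0] at h4
          apply List.eq_nil_of_length_eq_zero
          rw [List.length_tail, h4]
        rw [h2, h3, List.count_append, h1]
        simp
      by_cases hnd : r.support.Nodup
      · by_cases he : s(y, z) ∈ r.edges
        · have he' : s(y, z) ∈ r.darts.map SimpleGraph.Dart.edge := he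
          obtain ⟨d0, hd0, hd0e⟩ := List.mem_map.mp he'
          rw [dart_edge_eq_mk'_iff'] at hd0e
          rcases hd0e with hcase | hcase
          · exact absurd hcase.1 (dart_fst_ne_end r hnd hd0)
          · -- d0.toProd = (z, y)
            have hnn : ¬ r.Nil := by
              intro hnl
              rw [Walk.nil_iff_length_eq] at hnl
              have hdl := r.length_darts
              rw [hnl] at hdl
              exact List.ne_nil_of_mem hd0 (List.eq_nil_of_length_eq_zero hdl)
            obtain ⟨c, h2, s, hr'⟩ := Walk.not_nil_iff.mp hnn
            subst hr'
            rcases List.mem_cons.mp (by simpa [Walk.darts_cons] using hd0) with rfl | hd0'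
            · have hc : c = y := hcase.2
              subst hc
              have hnds : s.support.Nodup := by
                rw [Walk.support_cons, List.nodup_cons] at hnd
                exact hnd.2
              have hs : s = Walk.nil := closed_nodup_eq_nil s hnds
              subst hs
              rw [ws_cons, ws_cons, ws_nil, mul_one]
              exact hunit _ _ h
            · have hmem : z ∈ s.support := by
                rw [← hcase.1]
                exact Walk.dart_fst_mem_support_of_mem_darts s hd0'
              rw [Walk.support_cons, List.nodup_cons] at hnd
              exact absurd hmem hnd.1
        · have hcyc : (Walk.cons h r).IsCycle :=
            (Walk.cons_isCycle_iff r h).mpr ⟨(Walk.isPath_def r).mpr hnd, he⟩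
          exact hbal y hy (Walk.cons h r) hcyc
      · -- a vertex `a` repeats inside `r`
        obtain ⟨a, ha2⟩ : ∃ a, 2 ≤ r.support.count a := by
          by_contra hco
          push_neg at hco
          exact hnd (List.nodup_iff_count_le_one.mpr fun a => by have := hco a; omega)
        have ha1 : a ∈ r.support := by
          rw [← List.count_pos_iff]
          omega
        have hts := r.take_spec ha1
        set t1 := r.takeUntil a ha1 with ht1def
        set d1 := r.dropUntil a ha1 with hd1def
        have hcnt_t1 : t1.support.count a = 1 := r.count_support_takeUntil_eq_one ha1
        have hsupp : r.support = t1.support ++ d1.support.tail := by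
          rw [← Walk.support_append, hts]
        have hmem_tail : a ∈ d1.support.tail := by
          by_contra hno
          rw [hsupp, List.count_append, hcnt_t1, List.count_eq_zero_of_not_mem hno] at ha2
          omega
        have hnn : ¬ d1.Nil := by
          intro hnl
          rw [Walk.nil_iff_length_eq] at hnl
          have h4 := d1.length_support
          rw [hnl] at h4
          have h5 : d1.support.tail.length = 0 := by rw [List.length_tail, h4]
          exact List.ne_nil_of_mem hmem_tail (List.eq_nil_of_length_eq_zero h5)
        obtain ⟨c, h1, s, hd1eq⟩ := Walk.not_nil_iff.mp hnn
        have hmem_s : a ∈ s.support := by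
          rw [hd1eq, Walk.support_cons, List.tail_cons] at hmem_tail
          exact hmem_tail
        have hss := s.take_spec hmem_s
        set t2 := s.takeUntil a hmem_s with ht2def
        set d2 := s.dropUntil a hmem_s with hd2def
        have hra : H.Reachable u a := hy.trans ⟨Walk.cons h t1⟩
        have hlen : (Walk.cons h r).length
            = (Walk.cons h (t1.append d2)).length + (Walk.cons h1 t2).length := by
          rw [show r = t1.append (Walk.cons h1 (t2.append d2)) by rw [hss, ← hd1eq, hts]]
          simp only [Walk.length_append, Walk.length_cons]
          omega
        have hp2 : walkSign σ (Walk.cons h (t1.append d2)) = 1 := by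
          refine ih _ ?_ y hy _ rfl
          have l1 : (Walk.cons h1 t2).length = t2.length + 1 := Walk.length_cons _ _
          omega
        have hq1 : walkSign σ (Walk.cons h1 t2) = 1 := by
          refine ih _ ?_ a hra _ rfl
          have l1 : (Walk.cons h (t1.append d2)).length = (t1.append d2).length + 1 :=
            Walk.length_cons _ _
          omega
        have hfact : walkSign σ (Walk.cons h r)
            = walkSign σ (Walk.cons h (t1.append d2)) * walkSign σ (Walk.cons h1 t2) := by
          rw [show r = t1.append (Walk.cons h1 (t2.append d2)) by rw [hss, ← hd1eq, hts]]
          simp only [ws_cons, ws_append]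
          ring
        rw [hfact, hp2, hq1, mul_one]
    · -- `y` occurs inside `r`: split the closed walk at that occurrence
      set t := r.takeUntil y hyend with htdef
      set d := r.dropUntil y hyend with hddef
      have hts := r.take_spec hyend
      have hlen : r.length = t.length + d.length := by
        conv_lhs => rw [← hts]
        rw [Walk.length_append]
      have h1 : walkSign σ (Walk.cons h t) = 1 := by
        refine ih _ ?_ y hy _ rfl
        simp only [Walk.length_cons]
        omega
      have h2 : walkSign σ d = 1 := by
        refine ih _ ?_ y hy _ rfl
        simp only [Walk.length_cons]
        omega
      have hfact : walkSign σ (Walk.cons h r)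
          = walkSign σ (Walk.cons h t) * walkSign σ d := by
        conv_lhs => rw [← hts]
        rw [ws_cons, ws_append, ws_cons]
        ring
      rw [hfact, h1, h2, mul_one]

lemma cycle_detour {H : SimpleGraph V} {σ : V → V → ℤ}
    (hsym : ∀ a b, σ a b = σ b a)
    (hunit : ∀ a b, H.Adj a b → σ a b * σ b a = 1)
    {v : V} (w : H.Walk v v) (hw : w.IsCycle) (hsgn : walkSign σ w = 1)
    {e : Sym2 V} (he : e ∈ w.edges) :
    ∃ (a₀ b₀ : V) (r : H.Walk a₀ b₀), e = s(a₀, b₀) ∧ walkSign σ r = σ a₀ b₀ ∧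
      e ∉ r.edges ∧ ∀ ed ∈ r.edges, ed ∈ w.edges := by
  classical
  have he' : e ∈ w.darts.map SimpleGraph.Dart.edge := he
  obtain ⟨d, hd, hde⟩ := List.mem_map.mp he'
  have ha : d.fst ∈ w.support := Walk.dart_fst_mem_support_of_mem_darts w hd
  have hrot_sign : walkSign σ (w.rotate _ ha) = 1 := by rw [ws_rotate]; exact hsgn
  have hrot_cyc : (w.rotate _ ha).IsCycle := hw.rotate ha
  have hd2 : d ∈ (w.rotate _ ha).darts := (Walk.rotate_darts w _ ha).perm.mem_iff.mpr hd
  have hedges : ∀ ed ∈ (w.rotate _ ha).edges, ed ∈ w.edges := fun ed hed =>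
    (Walk.rotate_edges w _ ha).perm.mem_iff.mp hed
  obtain ⟨c, h2, q2, heq⟩ := Walk.not_nil_iff.mp hrot_cyc.not_nil
  rw [heq] at hrot_sign hrot_cyc hd2 hedges
  have hcyc := (Walk.cons_isCycle_iff q2 h2).mp hrot_cyc
  have hnd : q2.support.Nodup := (Walk.isPath_def q2).mp hcyc.1
  rcases List.mem_cons.mp (by simpa [Walk.darts_cons] using hd2) with hdhead | hdtail
  · have hsnd : d.snd = c := by rw [hdhead]
    subst hsnd
    have hee : e = s(d.fst, d.snd) := hde.symm
    have hne0 : σ d.fst d.snd ≠ 0 := by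
      intro hz
      have h5 := hunit d.fst d.snd h2
      rw [hz] at h5
      simp at h5
    have hq2sign : walkSign σ q2 = σ d.snd d.fst := by
      have h5 := hunit d.fst d.snd h2
      rw [ws_cons] at hrot_sign
      exact mul_left_cancel₀ hne0 (hrot_sign.trans h5.symm)
    refine ⟨d.fst, d.snd, q2.reverse, hee, ?_, ?_, ?_⟩
    · rw [ws_reverse hsym, hq2sign, hsym]
    · rw [Walk.edges_reverse, List.mem_reverse, hee]
      exact hcyc.2
    · intro ed hed
      rw [Walk.edges_reverse, List.mem_reverse] at hed
      exact hedges ed (by rw [Walk.edges_cons]; exact List.mem_cons_of_mem _ hed)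
  · exact absurd rfl (dart_fst_ne_end q2 hnd hdtail)

lemma exists_same_sign {H K : SimpleGraph V} {σ : V → V → ℤ}
    (hsym : ∀ a b, σ a b = σ b a) {a₀ b₀ : V}
    (r : K.Walk a₀ b₀) (hr : walkSign σ r = σ a₀ b₀)
    (hK : ∀ x c, H.Adj x c → s(x, c) ≠ s(a₀, b₀) → K.Adj x c) :
    ∀ {x y : V} (p : H.Walk x y),
      ∃ p' : K.Walk x y, walkSign σ p' = walkSign σ p := by
  intro x y p
  induction p with
  | nil => exact ⟨Walk.nil, rfl⟩
  | cons h q ih =>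
    rename_i x' m y'
    obtain ⟨q', hq'⟩ := ih
    by_cases he : s(x', m) = s(a₀, b₀)
    · rcases Sym2.eq_iff.mp he with ⟨rfl, rfl⟩ | ⟨rfl, rfl⟩
      · exact ⟨r.append q', by rw [ws_append, hq', hr, ws_cons]⟩
      · refine ⟨r.reverse.append q', ?_⟩
        rw [ws_append, ws_reverse hsym, hr, hq', ws_cons, hsym]
    · exact ⟨Walk.cons (hK _ _ h he) q', by rw [ws_cons, hq', ws_cons]⟩

end Stmt8Helpers

/-- Deleting the maximum edge of a balanced cycle contained in `F` preserves
unbalancedness of the component containing the cycle, and more generally each vertex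
lies in an unbalanced component of `⟨F \ {e}⟩` iff it does in `⟨F⟩`. -/
theorem stmt_8 [LinearOrder (Sym2 V)] (G : SimpleGraph V) (σ : V → V → ℤ)
    (hsym : ∀ u v, σ u v = σ v u)
    (hsign : ∀ u v, G.Adj u v → σ u v = 1 ∨ σ u v = -1)
    (F : Finset (Sym2 V)) (hF : F ⊆ edgeFS G)
    (C : Finset (Sym2 V)) (hCF : C ⊆ F) (hCne : C.Nonempty)
    (v : V) (w : (subOf F).Walk v v) (hw : w.IsCycle)
    (hsgn : walkSign σ w = 1) (hCe : C = w.edges.toFinset) :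
    (¬ BalancedCompAt (subOf F) σ v →
      ¬ BalancedCompAt (subOf (F.erase (C.max' hCne))) σ v) ∧
    (∀ u : V, ¬ BalancedCompAt (subOf F) σ u ↔
      ¬ BalancedCompAt (subOf (F.erase (C.max' hCne))) σ u) := by
  classical
  set e := C.max' hCne with he_def
  have he_mem : e ∈ w.edges := by
    have hmax : e ∈ C := C.max'_mem hCne
    rw [hCe] at hmax
    exact List.mem_toFinset.mp hmax
  have hHG : subOf F ≤ G := by
    intro a b hab
    simp only [subOf, SimpleGraph.fromEdgeSet_adj, Finset.mem_coe] at hab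
    have : s(a, b) ∈ edgeFS G := hF hab.1
    simp only [edgeFS, Set.mem_toFinset] at this
    exact this
  have hunitF : ∀ a b, (subOf F).Adj a b → σ a b * σ b a = 1 := by
    intro a b hab
    rw [← hsym a b]
    rcases hsign a b (hHG hab) with h | h <;> rw [h] <;> norm_num
  obtain ⟨a₀, b₀, r0, hee, hr0sign, hr0ne, hr0sub⟩ :=
    cycle_detour hsym hunitF w hw hsgn he_mem
  have htrans : ∀ ed ∈ r0.edges, ed ∈ (subOf (F.erase e)).edgeSet := by
    intro ed hed
    have h1 : ed ∈ (subOf F).edgeSet := r0.edges_subset_edgeSet hed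
    simp only [subOf, SimpleGraph.edgeSet_fromEdgeSet, Set.mem_diff, Finset.mem_coe] at h1 ⊢
    refine ⟨Finset.mem_erase.mpr ⟨fun hh => hr0ne (hh ▸ hed), h1.1⟩, h1.2⟩
  have hrsign : walkSign σ (r0.transfer (subOf (F.erase e)) htrans) = σ a₀ b₀ := by
    rw [ws_transfer, hr0sign]
  have hK : ∀ x c, (subOf F).Adj x c → s(x, c) ≠ s(a₀, b₀) →
      (subOf (F.erase e)).Adj x c := by
    intro x c hx hne
    simp only [subOf, SimpleGraph.fromEdgeSet_adj, Finset.mem_coe] at hx ⊢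
    refine ⟨Finset.mem_erase.mpr ⟨?_, hx.1⟩, hx.2⟩
    rw [hee]
    exact hne
  have E : ∀ {x y : V} (p : (subOf F).Walk x y),
      ∃ p' : (subOf (F.erase e)).Walk x y, walkSign σ p' = walkSign σ p :=
    fun p => exists_same_sign hsym (r0.transfer (subOf (F.erase e)) htrans) hrsign hK p
  have hreach : ∀ x y, (subOf F).Reachable x y → (subOf (F.erase e)).Reachable x y := by
    intro x y hxy
    obtain ⟨p⟩ := hxy
    obtain ⟨p', _⟩ := E p
    exact ⟨p'⟩
  have hle' : subOf (F.erase e) ≤ subOf F := by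
    simp only [subOf]
    exact SimpleGraph.fromEdgeSet_mono (Finset.coe_subset.mpr (F.erase_subset e))
  have hunitF' : ∀ a b, (subOf (F.erase e)).Adj a b → σ a b * σ b a = 1 :=
    fun a b hab => hunitF a b (hle' hab)
  have dir1 : ∀ u, BalancedCompAt (subOf (F.erase e)) σ u → BalancedCompAt (subOf F) σ u := by
    intro u hb' y hy c hc
    obtain ⟨c', hc'⟩ := E c
    have hone := closedWalkSign hunitF' hb' c'.length y (hreach u y hy) c' rfl
    rw [hc'] at hone
    exact hone
  have dir2 : ∀ u, BalancedCompAt (subOf F) σ u → BalancedCompAt (subOf (F.erase e)) σ u := by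
    intro u hb y hy c hc
    have hsub : ∀ ed ∈ c.edges, ed ∈ (subOf F).edgeSet := by
      intro ed hed
      have h1 := c.edges_subset_edgeSet hed
      exact (SimpleGraph.edgeSet_subset_edgeSet.mpr hle') h1
    have hone := hb y (SimpleGraph.Reachable.mono hle' hy) (c.transfer (subOf F) hsub)
      (hc.transfer hsub)
    rw [ws_transfer] at hone
    exact hone
  refine ⟨fun h hb' => h (dir1 v hb'),
    fun u => ⟨fun h hb' => h (dir1 u hb'), fun h hb => h (dir2 u hb)⟩⟩
end

section
/- Let Σ be a signed graph and F a set of edges containing no broken circuit (with respect to a fixed linear order on E(Σ)). Then every connected component of the spanning subgraph ⟨F⟩ is either a tree or contains exactly one cycle, which is unbalanced. Consequently |F| ≤ |V(Σ)| and the number of balanced components of ⟨F⟩ equals |V(Σ)| − |F|. -/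
open scoped Classical

variable {V : Type} [Fintype V] [LinearOrder V]

set_option linter.unusedSectionVars false
set_option maxHeartbeats 1000000

namespace SGAux
open SimpleGraph Walk

variable {σ : V → V → ℤ} {G H : SimpleGraph V}

@[simp] lemma walkSign_nil {u : V} : walkSign σ (Walk.nil : G.Walk u u) = 1 := rfl

@[simp] lemma walkSign_cons {u v w : V} (h : G.Adj u v) (p : G.Walk v w) :
    walkSign σ (Walk.cons h p) = σ u v * walkSign σ p := by
  simp [walkSign]

@[simp] lemma walkSign_append {u v w : V} (p : G.Walk u v) (q : G.Walk v w) :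
    walkSign σ (p.append q) = walkSign σ p * walkSign σ q := by
  simp [walkSign, Walk.darts_append]

lemma walkSign_reverse (hsym : ∀ u v, σ u v = σ v u) {u v : V} (p : G.Walk u v) :
    walkSign σ p.reverse = walkSign σ p := by
  simp only [walkSign, Walk.darts_reverse, List.map_reverse, List.prod_reverse, List.map_map]
  congr 1
  apply List.map_congr_left
  intro d _
  simp [Function.comp, SimpleGraph.Dart.symm, hsym d.toProd.1 d.toProd.2]

lemma walkSign_rotate {u v : V} (c : G.Walk v v) (h : u ∈ c.support) :
    walkSign σ (c.rotate _ h) = walkSign σ c := by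
  unfold walkSign
  exact List.Perm.prod_eq (List.Perm.map _ (Walk.rotate_darts c _ h).perm)

lemma walkSign_mapLe (h : G ≤ H) {u v : V} (p : G.Walk u v) :
    walkSign σ (p.mapLe h) = walkSign σ p := by
  induction p with
  | nil => rfl
  | cons ha p ih =>
    have : (Walk.cons ha p).mapLe h = Walk.cons (h ha) (p.mapLe h) := rfl
    rw [this, walkSign_cons, walkSign_cons, ih]

lemma walkSign_transfer {u v : V} (p : G.Walk u v) (hp : ∀ e ∈ p.edges, e ∈ H.edgeSet) :
    walkSign σ (p.transfer H hp) = walkSign σ p := by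
  induction p with
  | nil => rfl
  | cons ha p ih =>
    simp only [Walk.transfer]
    exact (walkSign_cons _ _).trans (congrArg _ (ih _))

lemma walkSign_pm (hsign : ∀ u v, G.Adj u v → σ u v = 1 ∨ σ u v = -1) {u v : V}
    (p : G.Walk u v) : walkSign σ p = 1 ∨ walkSign σ p = -1 := by
  induction p with
  | nil => left; rfl
  | cons ha p ih =>
    rw [walkSign_cons]
    rcases hsign _ _ ha with h | h <;> rcases ih with h' | h' <;> simp [h, h']

lemma walkSign_sq (hsign : ∀ u v, G.Adj u v → σ u v = 1 ∨ σ u v = -1) {u v : V}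
    (p : G.Walk u v) : walkSign σ p * walkSign σ p = 1 := by
  rcases walkSign_pm hsign p with h | h <;> simp [h]

end SGAux

section Chunk2
open SimpleGraph Walk

variable {σ : V → V → ℤ} {G : SimpleGraph V}

lemma subOf_le {F : Finset (Sym2 V)} (hF : F ⊆ edgeFS G) : subOf F ≤ G := by
  intro u v h
  rcases h with ⟨he, hne⟩
  have : s(u,v) ∈ edgeFS G := hF he
  simpa [edgeFS, SimpleGraph.mem_edgeSet] using (Set.mem_toFinset.mp this)

lemma subOf_edgeSet {F : Finset (Sym2 V)} (hF : F ⊆ edgeFS G) :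
    (subOf F).edgeSet = ↑F := by
  rw [subOf, SimpleGraph.edgeSet_fromEdgeSet]
  ext e
  simp only [Set.mem_diff, Finset.coe_sort_coe, Set.mem_setOf_eq, Finset.mem_coe]
  refine ⟨fun h => h.1, fun h => ⟨h, fun hd => ?_⟩⟩
  have : e ∈ G.edgeSet := by simpa [edgeFS] using (hF h)
  exact G.not_isDiag_of_mem_edgeSet this hd

lemma edges_subset_F {F : Finset (Sym2 V)} (hF : F ⊆ edgeFS G) {u v : V}
    (p : (subOf F).Walk u v) : ∀ e ∈ p.edges, e ∈ F := by
  intro e he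
  have := p.edges_subset_edgeSet he
  rwa [subOf_edgeSet hF, Finset.mem_coe] at this

lemma edges_mapLe {G H : SimpleGraph V} (h : G ≤ H) {u v : V} (p : G.Walk u v) :
    (p.mapLe h).edges = p.edges := by
  induction p with
  | nil => rfl
  | cons ha p ih =>
    have h2 : (Walk.cons ha p).mapLe h = Walk.cons (h ha) (p.mapLe h) := rfl
    rw [h2, Walk.edges_cons, Walk.edges_cons, ih]

lemma support_mapLe {G H : SimpleGraph V} (h : G ≤ H) {u v : V} (p : G.Walk u v) :
    (p.mapLe h).support = p.support := by
  induction p with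
  | nil => rfl
  | cons ha p ih =>
    have h2 : (Walk.cons ha p).mapLe h = Walk.cons (h ha) (p.mapLe h) := rfl
    rw [h2, Walk.support_cons, Walk.support_cons, ih]

lemma cycle_edges_ne_nil {G : SimpleGraph V} {u : V} {w : G.Walk u u} (hw : w.IsCycle) :
    w.edges ≠ [] := by
  cases w with
  | nil => exact absurd rfl hw.ne_nil
  | cons ha p => simp

/-- A circuit's edge set is never contained in a broken-circuit-free set. -/
lemma circuit_not_subset [LinearOrder (Sym2 V)] {F C : Finset (Sym2 V)}
    (hfree : BCFree G σ F) (hC : C.Nonempty) (hcirc : IsCircuit G σ C) (hsub : C ⊆ F) :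
    False := by
  exact hfree (C.erase (C.max' hC)) ⟨C, hC, hcirc, rfl⟩
    (Finset.Subset.trans (Finset.erase_subset _ _) hsub)

/-- Part 1: every cycle in ⟨F⟩ is unbalanced. -/
lemma no_balanced_cycle [LinearOrder (Sym2 V)] (hsym : ∀ u v, σ u v = σ v u)
    (hsign : ∀ u v, G.Adj u v → σ u v = 1 ∨ σ u v = -1)
    {F : Finset (Sym2 V)} (hF : F ⊆ edgeFS G) (hfree : BCFree G σ F) :
    ∀ (u : V) (w : (subOf F).Walk u u), w.IsCycle → walkSign σ w = -1 := by
  intro u w hw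
  have hle : subOf F ≤ G := subOf_le hF
  have hsign' : ∀ a b, (subOf F).Adj a b → σ a b = 1 ∨ σ a b = -1 :=
    fun a b h => hsign a b (hle h)
  rcases SGAux.walkSign_pm hsign' w with h1 | h1
  · exfalso
    set wG := w.mapLe hle with hwG
    have hcyc : wG.IsCycle := hw.mapLe hle
    have hsg : walkSign σ wG = 1 := by rw [SGAux.walkSign_mapLe]; exact h1
    have hCne : (wG.edges.toFinset : Finset (Sym2 V)).Nonempty := by
      rw [hwG, edges_mapLe]
      rcases List.exists_mem_of_ne_nil _ (cycle_edges_ne_nil hw) with ⟨e, he⟩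
      exact ⟨e, List.mem_toFinset.mpr he⟩
    refine circuit_not_subset hfree hCne (Or.inl ⟨u, wG, hcyc, hsg, rfl⟩) ?_
    intro e he
    rw [List.mem_toFinset, hwG, edges_mapLe] at he
    exact edges_subset_F hF w e he
  · exact h1
end Chunk2

section Chunk3
open SimpleGraph Walk

variable {H : SimpleGraph V}

lemma end_mem_support_tail {y x : V} (w : H.Walk y x) (hne : y ≠ x) :
    x ∈ w.support.tail := by
  cases w with
  | nil => exact absurd rfl hne
  | cons h p => simpa using p.end_mem_support

/-- Split a walk at the first vertex belonging to `S` (the end is in `S`). -/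
lemma exists_firstHit (S : Set V) {c b : V} (w : H.Walk c b) (hb : b ∈ S) :
    ∃ (x : V) (hx : x ∈ S) (w₁ : H.Walk c x) (w₂ : H.Walk x b),
      w = w₁.append w₂ ∧ ∀ z ∈ w₁.support.dropLast, z ∉ S := by
  induction w with
  | nil =>
    exact ⟨_, hb, Walk.nil, Walk.nil, rfl, by simp⟩
  | @cons c m b h p ih =>
    by_cases hc : c ∈ S
    · exact ⟨c, hc, Walk.nil, Walk.cons h p, rfl, by simp⟩
    · obtain ⟨x, hx, w₁, w₂, hsplit, hoff⟩ := ih hb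
      refine ⟨x, hx, Walk.cons h w₁, w₂, by rw [hsplit]; rfl, ?_⟩
      intro z hz
      rw [Walk.support_cons, List.dropLast_cons_of_ne_nil w₁.support_ne_nil] at hz
      rcases List.mem_cons.mp hz with rfl | hz
      · exact hc
      · exact hoff z hz

/-- Split a walk at the last vertex belonging to `S` (the start is in `S`). -/
lemma exists_lastHit (S : Set V) {a c : V} (w : H.Walk a c) (ha : a ∈ S) :
    ∃ (x : V) (hx : x ∈ S) (w₁ : H.Walk a x) (w₂ : H.Walk x c),
      w = w₁.append w₂ ∧ ∀ z ∈ w₂.support.tail, z ∉ S := by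
  obtain ⟨x, hx, r₁, r₂, hsplit, hoff⟩ := exists_firstHit S w.reverse ha
  refine ⟨x, hx, r₂.reverse, r₁.reverse, ?_, ?_⟩
  · have := congrArg Walk.reverse hsplit
    rw [Walk.reverse_reverse, Walk.reverse_append] at this
    exact this
  · intro z hz
    rw [Walk.support_reverse, List.tail_reverse, List.mem_reverse] at hz
    exact hoff z hz

/-- Split a walk at an edge. -/
lemma exists_split_at_edge {a b : V} (w : H.Walk a b) {e : Sym2 V} (he : e ∈ w.edges) :
    ∃ (c d : V) (h : H.Adj c d) (q : H.Walk a c) (r : H.Walk d b),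
      w = q.append (Walk.cons h r) ∧ e = s(c, d) := by
  induction w with
  | nil => simp at he
  | @cons a m b h p ih =>
    rw [Walk.edges_cons, List.mem_cons] at he
    rcases he with he | he
    · exact ⟨a, m, h, Walk.nil, p, rfl, he⟩
    · obtain ⟨c, d, h', q, r, hsplit, hee⟩ := ih he
      exact ⟨c, d, h', Walk.cons h q, r, by rw [hsplit]; rfl, hee⟩

/-- Glue two internally-disjoint paths with distinct endpoints into a cycle. -/
lemma cycle_of_paths {x y : V} (p : H.Walk x y) (q : H.Walk y x)
    (hp : p.IsPath) (hq : q.IsPath) (hxy : x ≠ y)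
    (hint : ∀ z, z ∈ p.support → z ∈ q.support → z = x ∨ z = y)
    (hed : p.edges.Disjoint q.edges) : (p.append q).IsCycle := by
  rw [Walk.isCycle_def]
  have hpx : x ∉ p.support.tail := by
    have := hp.support_nodup
    rw [p.support_eq_cons] at this
    exact (List.nodup_cons.mp this).1
  have hqy : y ∉ q.support.tail := by
    have := hq.support_nodup
    rw [q.support_eq_cons] at this
    exact (List.nodup_cons.mp this).1
  refine ⟨?_, ?_, ?_⟩
  · rw [Walk.isTrail_def, Walk.edges_append, List.nodup_append']
    exact ⟨hp.isTrail.edges_nodup, hq.isTrail.edges_nodup, hed⟩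
  · intro hn
    have hy : y ∈ (p.append q).support := by
      rw [Walk.support_append]
      exact List.mem_append_left _ p.end_mem_support
    rw [hn] at hy
    simp at hy
    exact hxy hy.symm
  · have hsupp : (p.append q).support.tail = p.support.tail ++ q.support.tail := by
      rw [Walk.support_append, p.support_eq_cons]
      simp
    rw [hsupp, List.nodup_append']
    refine ⟨(List.nodup_cons.mp (by rw [← p.support_eq_cons]; exact hp.support_nodup)).2,
      (List.nodup_cons.mp (by rw [← q.support_eq_cons]; exact hq.support_nodup)).2, ?_⟩
    intro z hz1 hz2
    have h1 : z ∈ p.support := by rw [p.support_eq_cons]; exact List.mem_cons_of_mem _ hz1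
    have h2 : z ∈ q.support := by rw [q.support_eq_cons]; exact List.mem_cons_of_mem _ hz2
    rcases hint z h1 h2 with rfl | rfl
    · exact hpx hz1
    · exact hqy hz2

/-- `takeUntil` and `dropUntil` of a cycle at a vertex distinct from the base are paths. -/
lemma cycle_takeUntil_isPath {x y : V} (c : H.Walk x x) (hc : c.IsCycle)
    (hy : y ∈ c.support) (hyx : y ≠ x) :
    (c.takeUntil y hy).IsPath ∧ (c.dropUntil y hy).IsPath := by
  classical
  set Q1 := c.takeUntil y hy with hQ1
  set Q2 := c.dropUntil y hy with hQ2
  have hspec : Q1.append Q2 = c := c.take_spec hy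
  have hsupp : c.support = Q1.support ++ Q2.support.tail := by
    rw [← hspec, Walk.support_append]
  have htail : c.support.tail = Q1.support.tail ++ Q2.support.tail := by
    rw [hsupp, Q1.support_eq_cons]
    simp
  have hnd := hc.2
  rw [htail, List.nodup_append'] at hnd
  obtain ⟨hnd1, hnd2, hdisj⟩ := hnd
  have hxQ2 : x ∈ Q2.support.tail := end_mem_support_tail Q2 hyx
  constructor
  · apply Walk.IsPath.mk'
    rw [Q1.support_eq_cons, List.nodup_cons]
    refine ⟨fun hxt => hdisj hxt hxQ2, hnd1⟩
  · apply Walk.IsPath.mk'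
    rw [Q2.support_eq_cons, List.nodup_cons]
    refine ⟨fun hyt => ?_, hnd2⟩
    have hyQ1 : y ∈ Q1.support.tail := end_mem_support_tail Q1 (fun h => hyx h.symm)
    exact hdisj hyQ1 hyt

end Chunk3
section Chunk4
open SimpleGraph Walk

variable {H : SimpleGraph V}

lemma end_mem_support_tail' {y x : V} {w : H.Walk y x} (hne : ¬ w.Nil) :
    x ∈ w.support.tail := by
  cases w with
  | nil => simp at hne
  | cons h p => simpa using p.end_mem_support

lemma mem_support_cases {a b z : V} (w : H.Walk a b) (hz : z ∈ w.support) :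
    z = b ∨ z ∈ w.support.dropLast := by
  have h1 : z ∈ w.reverse.support := by rwa [Walk.support_reverse, List.mem_reverse]
  rw [w.reverse.support_eq_cons] at h1
  rcases List.mem_cons.mp h1 with rfl | h1
  · exact Or.inl rfl
  · right
    rw [Walk.support_reverse, List.tail_reverse, List.mem_reverse] at h1
    exact h1

lemma walk_edge_ne {a b a' b' : V} {w : H.Walk a b} (hf : s(a', b') ∈ w.edges) :
    a' ≠ b' := by
  have := w.edges_subset_edgeSet hf
  rw [SimpleGraph.mem_edgeSet] at this
  exact this.ne

/-- Arc dichotomy: given a cycle `c2` based at `v ∈ S` and an edge of `c2` outside `E1`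
(where `E1`-edges have both endpoints in `S`), either there is an "arc" `B` between two
distinct vertices of `S`, internally avoiding `S`, with no `E1`-edges, or `c2` meets `S`
only in `v`. -/
lemma arc_dichotomy {v : V} (c2 : H.Walk v v) (hc2 : c2.IsCycle)
    (S : Set V) (hv : v ∈ S) (E1 : Set (Sym2 V))
    (hE1 : ∀ a b : V, s(a, b) ∈ E1 → a ∈ S ∧ b ∈ S)
    {e0 : Sym2 V} (he0 : e0 ∈ c2.edges) (he0' : e0 ∉ E1) :
    (∃ (x y : V) (B : H.Walk x y), x ∈ S ∧ y ∈ S ∧ x ≠ y ∧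
       (∀ z ∈ B.support, z ∈ S → z = x ∨ z = y) ∧
       (∀ f ∈ B.edges, f ∉ E1) ∧ (∀ f ∈ B.edges, f ∈ c2.edges)) ∨
    (∀ z ∈ c2.support, z ∈ S → z = v) := by
  classical
  obtain ⟨c, d, h, q, r, hsplit, he0eq⟩ := exists_split_at_edge c2 he0
  obtain ⟨x, hxS, A, q₂, hq, hq₂off⟩ := exists_lastHit S q hv
  obtain ⟨y, hyS, r₂, C, hr, hr₂off⟩ := exists_firstHit S r hv
  -- support decomposition of c2
  have hsupp : c2.support =
      (A.support ++ q₂.support.tail) ++ (r₂.support ++ C.support.tail) := by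
    rw [hsplit, Walk.support_append, Walk.support_cons, List.tail_cons, hq, hr,
      Walk.support_append, Walk.support_append]
  -- edges of the arc
  have hBedge_sub : ∀ f ∈ (q₂.append (Walk.cons h r₂)).edges, f ∈ c2.edges := by
    intro f hf
    rw [Walk.edges_append, Walk.edges_cons] at hf
    rw [hsplit, Walk.edges_append, Walk.edges_cons, hq, hr, Walk.edges_append,
      Walk.edges_append]
    rcases List.mem_append.mp hf with hf | hf
    · exact List.mem_append_left _ (List.mem_append_right _ hf)
    · rcases List.mem_cons.mp hf with rfl | hf
      · exact List.mem_append_right _ List.mem_cons_self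
      · exact List.mem_append_right _ (List.mem_cons_of_mem _
          (List.mem_append_left _ hf))
  have hBedge_notE1 : ∀ f ∈ (q₂.append (Walk.cons h r₂)).edges, f ∉ E1 := by
    intro f hf hfE1
    rw [Walk.edges_append, Walk.edges_cons] at hf
    induction f using Sym2.ind with
    | _ a b =>
    have hab : a ≠ b := by
      rcases List.mem_append.mp hf with hf | hf
      · exact walk_edge_ne hf
      · rcases List.mem_cons.mp hf with heq | hf
        · have : H.Adj c d := h
          rw [Sym2.eq_iff] at heq
          rcases heq with ⟨rfl, rfl⟩ | ⟨rfl, rfl⟩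
          · exact this.ne
          · exact this.ne.symm
        · exact walk_edge_ne hf
    have haS := (hE1 a b hfE1).1
    have hbS := (hE1 a b hfE1).2
    rcases List.mem_append.mp hf with hf | hf
    · -- edge of q₂ : support = x :: tail, tail off S
      have ha : a ∈ q₂.support := Walk.fst_mem_support_of_mem_edges _ hf
      have hb : b ∈ q₂.support := Walk.snd_mem_support_of_mem_edges _ hf
      rw [q₂.support_eq_cons] at ha hb
      rcases List.mem_cons.mp ha with rfl | ha
      · rcases List.mem_cons.mp hb with rfl | hb
        · exact hab rfl
        · exact hq₂off b hb hbS
      · exact hq₂off a ha haS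
    · rcases List.mem_cons.mp hf with heq | hf
      · exact he0' (by rw [he0eq, ← heq]; exact hfE1)
      · -- edge of r₂ : dropLast off S
        have ha : a ∈ r₂.support := Walk.fst_mem_support_of_mem_edges _ hf
        have hb : b ∈ r₂.support := Walk.snd_mem_support_of_mem_edges _ hf
        rcases mem_support_cases r₂ ha with rfl | ha
        · rcases mem_support_cases r₂ hb with rfl | hb
          · exact hab rfl
          · exact hr₂off b hb hbS
        · exact hr₂off a ha haS
  by_cases hxy : x = y
  · -- degenerate: show c2 meets S only in v
    right
    subst hxy
    have hT : c2.support.tail.Nodup := hc2.2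
    have htail : c2.support.tail =
        A.support.tail ++ (q₂.support.tail ++ (r₂.support ++ C.support.tail)) := by
      rw [hsupp, A.support_eq_cons]
      simp [List.append_assoc]
    rw [htail] at hT
    obtain ⟨-, hT2, hdisj1⟩ := List.nodup_append'.mp hT
    have hxr₂ : x ∈ r₂.support := by
      have : x ∈ r₂.support ↔ True := by simp [r₂.end_mem_support]
      exact r₂.end_mem_support
    -- A is nil
    cases A with
    | cons h' A' =>
      exfalso
      have hx1 : x ∈ (Walk.cons h' A').support.tail := by
        rw [Walk.support_cons, List.tail_cons]; exact A'.end_mem_support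
      exact hdisj1 hx1 (List.mem_append_right _ (List.mem_append_left _ hxr₂))
    | nil =>
      -- now x = v
      cases C with
      | cons h'' C' =>
        exfalso
        obtain ⟨-, hT3, -⟩ := List.nodup_append'.mp hT2
        obtain ⟨-, -, hdisj2⟩ := List.nodup_append'.mp hT3
        refine hdisj2 hxr₂ ?_
        show v ∈ (Walk.cons h'' C').support.tail
        rw [Walk.support_cons, List.tail_cons]
        exact C'.end_mem_support
      | nil =>
        intro z hz hzS
        rw [hsupp] at hz
        simp only [Walk.support_nil, List.mem_append] at hz
        rcases hz with hz | hz
        · rcases hz with hz | hz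
          · rcases List.mem_cons.mp hz with rfl | hz
            · rfl
            · simp at hz
          · exact absurd hzS (hq₂off z hz)
        · rcases hz with hz | hz
          · rcases mem_support_cases r₂ hz with rfl | hz
            · rfl
            · exact absurd hzS (hr₂off z hz)
          · simp at hz
  · left
    refine ⟨x, y, q₂.append (Walk.cons h r₂), hxS, hyS, hxy, ?_, hBedge_notE1, hBedge_sub⟩
    intro z hz hzS
    rw [Walk.support_append, Walk.support_cons, List.tail_cons] at hz
    rcases List.mem_append.mp hz with hz | hz
    · rw [q₂.support_eq_cons] at hz
      rcases List.mem_cons.mp hz with rfl | hz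
      · exact Or.inl rfl
      · exact absurd hzS (hq₂off z hz)
    · rcases mem_support_cases r₂ hz with rfl | hz
      · exact Or.inr rfl
      · exact absurd hzS (hr₂off z hz)
end Chunk4
section Chunk5a
open SimpleGraph Walk

variable {H : SimpleGraph V}

lemma mem_support_rotate {v u z : V} {c : H.Walk v v} (hnn : ¬c.Nil)
    (h : u ∈ c.support) : z ∈ (c.rotate _ h).support ↔ z ∈ c.support := by
  classical
  have hperm := Walk.support_rotate c _ h
  constructor
  · intro hz
    rw [(c.rotate _ h).support_eq_cons] at hz
    rcases List.mem_cons.mp hz with rfl | hz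
    · exact h
    · rw [hperm.mem_iff] at hz
      rw [c.support_eq_cons]
      exact List.mem_cons_of_mem _ hz
  · intro hz
    rw [c.support_eq_cons] at hz
    have : z ∈ c.support.tail → z ∈ (c.rotate _ h).support := by
      intro hz'
      rw [← hperm.mem_iff] at hz'
      rw [(c.rotate _ h).support_eq_cons]
      exact List.mem_cons_of_mem _ hz'
    rcases List.mem_cons.mp hz with rfl | hz
    · exact this (end_mem_support_tail' hnn)
    · exact this hz

lemma mem_edges_rotate {v u : V} {c : H.Walk v v} (h : u ∈ c.support) {f : Sym2 V} :
    f ∈ (c.rotate _ h).edges ↔ f ∈ c.edges := by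
  classical
  exact (Walk.rotate_edges c _ h).mem_iff

end Chunk5a
section Chunk5b
open SimpleGraph Walk

variable {σ : V → V → ℤ} {G : SimpleGraph V}

/-- Two vertex-disjoint (except as specified) cycles joined by a path inside ⟨F⟩ give a
barbell circuit inside `F`, contradicting `BCFree`. -/
lemma barbell_contra [LinearOrder (Sym2 V)] (hsym : ∀ u v, σ u v = σ v u)
    (hsign : ∀ u v, G.Adj u v → σ u v = 1 ∨ σ u v = -1)
    {F : Finset (Sym2 V)} (hF : F ⊆ edgeFS G) (hfree : BCFree G σ F)
    {v1 v2 : V} (w₁ : (subOf F).Walk v1 v1) (w₂ : (subOf F).Walk v2 v2)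
    (p : (subOf F).Walk v1 v2)
    (h₁ : w₁.IsCycle) (h₂ : w₂.IsCycle) (hp : p.IsPath)
    (hc1 : ∀ x ∈ w₁.support, x ≠ v1 → x ∉ p.support ∧ x ∉ w₂.support)
    (hc2 : ∀ x ∈ w₂.support, x ≠ v2 → x ∉ p.support ∧ x ∉ w₁.support) : False := by
  have hle : subOf F ≤ G := subOf_le hF
  have hs1 : walkSign σ w₁ = -1 := no_balanced_cycle hsym hsign hF hfree _ _ h₁
  have hs2 : walkSign σ w₂ = -1 := no_balanced_cycle hsym hsign hF hfree _ _ h₂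
  set W1 := w₁.mapLe hle with hW1
  set W2 := w₂.mapLe hle with hW2
  set P := p.mapLe hle with hP
  have hbar : IsBarbell G σ
      (W1.edges.toFinset ∪ W2.edges.toFinset ∪ P.edges.toFinset) := by
    refine ⟨v1, v2, W1, W2, P, h₁.mapLe hle, h₂.mapLe hle, (Walk.mapLe_isPath hle).mpr hp, ?_, ?_, ?_, ?_, rfl⟩
    · rw [hW1, SGAux.walkSign_mapLe]; exact hs1
    · rw [hW2, SGAux.walkSign_mapLe]; exact hs2
    · intro x hx hxv
      rw [hW1, support_mapLe] at hx
      rw [hP, support_mapLe, hW2, support_mapLe]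
      exact hc1 x hx hxv
    · intro x hx hxv
      rw [hW2, support_mapLe] at hx
      rw [hP, support_mapLe, hW1, support_mapLe]
      exact hc2 x hx hxv
  have hne : (W1.edges.toFinset ∪ W2.edges.toFinset ∪ P.edges.toFinset).Nonempty := by
    rcases List.exists_mem_of_ne_nil _ (cycle_edges_ne_nil (h₁.mapLe hle)) with ⟨e, he⟩
    exact ⟨e, by rw [Finset.mem_union, Finset.mem_union, List.mem_toFinset]; exact Or.inl (Or.inl he)⟩
  refine circuit_not_subset hfree hne (Or.inr hbar) ?_
  intro e he
  rcases Finset.mem_union.mp he with he | he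
  · rcases Finset.mem_union.mp he with he | he
    · rw [List.mem_toFinset, hW1, edges_mapLe] at he
      exact edges_subset_F hF w₁ e he
    · rw [List.mem_toFinset, hW2, edges_mapLe] at he
      exact edges_subset_F hF w₂ e he
  · rw [List.mem_toFinset, hP, edges_mapLe] at he
    exact edges_subset_F hF p e he

/-- Part 2 (one-sided): any edge of a cycle belongs to any other cycle in the same component. -/
lemma cycle_edges_subset [LinearOrder (Sym2 V)] (hsym : ∀ u v, σ u v = σ v u)
    (hsign : ∀ u v, G.Adj u v → σ u v = 1 ∨ σ u v = -1)
    {F : Finset (Sym2 V)} (hF : F ⊆ edgeFS G) (hfree : BCFree G σ F)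
    (u u' : V) (w : (subOf F).Walk u u) (w' : (subOf F).Walk u' u')
    (hw : w.IsCycle) (hw' : w'.IsCycle) (hreach : (subOf F).Reachable u u') :
    ∀ e0 ∈ w'.edges, e0 ∈ w.edges := by
  classical
  intro e0 he0w'
  by_contra he0notw
  set S : Set V := {z | z ∈ w.support} with hS
  set E1 : Set (Sym2 V) := {f | f ∈ w.edges} with hE1def
  have hE1 : ∀ a b : V, s(a, b) ∈ E1 → a ∈ S ∧ b ∈ S := fun a b hab =>
    ⟨Walk.fst_mem_support_of_mem_edges _ hab, Walk.snd_mem_support_of_mem_edges _ hab⟩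
  by_cases hshare : ∃ z, z ∈ w.support ∧ z ∈ w'.support
  · obtain ⟨v, hvw, hvw'⟩ := hshare
    set c2 := w'.rotate _ hvw' with hc2def
    have hc2 : c2.IsCycle := hw'.rotate hvw'
    have he0c2 : e0 ∈ c2.edges := (mem_edges_rotate hvw').mpr he0w'
    rcases arc_dichotomy c2 hc2 S hvw E1 hE1 he0c2 he0notw with
      ⟨x, y, B, hxS, hyS, hxy, hhits, hBnotE1, hBsub⟩ | hone
    · -- theta case
      have hxw : x ∈ w.support := hxS
      set c1 := w.rotate _ hxw with hc1def
      have hc1 : c1.IsCycle := hw.rotate hxw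
      have hmemc1 : ∀ {z : V}, z ∈ c1.support ↔ z ∈ w.support :=
        fun {z} => mem_support_rotate hw.not_nil hxw
      have hyc1 : y ∈ c1.support := hmemc1.mpr hyS
      obtain ⟨hQ1path, hQ2path⟩ := cycle_takeUntil_isPath c1 hc1 hyc1 (Ne.symm hxy)
      set Q1 := c1.takeUntil y hyc1 with hQ1def
      set Q2 := c1.dropUntil y hyc1 with hQ2def
      set P := B.bypass with hPdef
      have hPpath : P.IsPath := B.bypass_isPath
      have hPsupp : ∀ z ∈ P.support, z ∈ S → z = x ∨ z = y :=
        fun z hz => hhits z (B.support_bypass_subset hz)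
      have hPedges : ∀ f ∈ P.edges, f ∉ E1 :=
        fun f hf => hBnotE1 f (B.edges_bypass_subset hf)
      have hQ1S : ∀ z ∈ Q1.support, z ∈ S :=
        fun z hz => hmemc1.mp (c1.support_takeUntil_subset hyc1 hz)
      have hQ2S : ∀ z ∈ Q2.support, z ∈ S :=
        fun z hz => hmemc1.mp (c1.support_dropUntil_subset hyc1 hz)
      have hQ1E1 : ∀ f ∈ Q1.edges, f ∈ E1 :=
        fun f hf => (mem_edges_rotate hxw).mp (c1.edges_takeUntil_subset hyc1 hf)
      have hQ2E1 : ∀ f ∈ Q2.edges, f ∈ E1 :=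
        fun f hf => (mem_edges_rotate hxw).mp (c1.edges_dropUntil_subset hyc1 hf)
      have hZ1 : (Q1.append P.reverse).IsCycle := by
        refine cycle_of_paths Q1 P.reverse hQ1path hPpath.reverse hxy ?_ ?_
        · intro z hz1 hz2
          rw [Walk.support_reverse, List.mem_reverse] at hz2
          exact hPsupp z hz2 (hQ1S z hz1)
        · intro f hf1 hf2
          rw [Walk.edges_reverse, List.mem_reverse] at hf2
          exact hPedges f hf2 (hQ1E1 f hf1)
      have hZ2 : (P.append Q2).IsCycle := by
        refine cycle_of_paths P Q2 hPpath hQ2path hxy ?_ ?_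
        · intro z hz1 hz2
          exact hPsupp z hz1 (hQ2S z hz2)
        · intro f hf1 hf2
          exact hPedges f hf1 (hQ2E1 f hf2)
      have hs1 : walkSign σ (Q1.append P.reverse) = -1 :=
        no_balanced_cycle hsym hsign hF hfree _ _ hZ1
      have hs2 : walkSign σ (P.append Q2) = -1 :=
        no_balanced_cycle hsym hsign hF hfree _ _ hZ2
      have hsc1 : walkSign σ c1 = -1 :=
        no_balanced_cycle hsym hsign hF hfree _ _ hc1
      have hq1q2 : walkSign σ Q1 * walkSign σ Q2 = -1 := by
        rw [← SGAux.walkSign_append]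
        rw [hQ1def, hQ2def, c1.take_spec hyc1]
        exact hsc1
      have hsq : walkSign σ P * walkSign σ P = 1 := by
        apply SGAux.walkSign_sq
        intro a b hab
        exact hsign a b (subOf_le hF hab)
      have key : walkSign σ (Q1.append P.reverse) * walkSign σ (P.append Q2) =
          walkSign σ Q1 * walkSign σ Q2 * (walkSign σ P * walkSign σ P) := by
        rw [SGAux.walkSign_append, SGAux.walkSign_append, SGAux.walkSign_reverse hsym]
        ring
      rw [hs1, hs2, hq1q2, hsq] at key
      norm_num at key
    · -- single shared vertex: barbell with trivial path
      refine barbell_contra hsym hsign hF hfree (w.rotate _ hvw) c2 Walk.nil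
        (hw.rotate hvw) hc2 Walk.IsPath.nil ?_ ?_
      · intro z hz hzv
        have hzS : z ∈ S := (mem_support_rotate hw.not_nil hvw).mp hz
        constructor
        · rw [Walk.support_nil]; simpa using hzv
        · intro hz2
          exact hzv (hone z hz2 hzS)
      · intro z hz hzv
        constructor
        · rw [Walk.support_nil]; simpa using hzv
        · intro hz2
          exact hzv (hone z hz ((mem_support_rotate hw.not_nil hvw).mp hz2))
  · -- disjoint supports: barbell with connecting path
    push_neg at hshare
    rcases hreach with ⟨W⟩
    obtain ⟨v1, hv1, W1, W₂, hWsplit, hW₂off⟩ :=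
      exists_lastHit {z | z ∈ w.support} W w.start_mem_support
    obtain ⟨v2, hv2, W₃, W4, hW₂split, hW₃off⟩ :=
      exists_firstHit {z | z ∈ w'.support} W₂ w'.start_mem_support
    have hW₃tail : ∀ z ∈ W₃.support.tail, z ∉ ({z | z ∈ w.support} : Set V) := by
      intro z hz
      apply hW₂off
      rw [hW₂split, Walk.support_append, W₃.support_eq_cons]
      simp only [List.cons_append, List.tail_cons]
      exact List.mem_append_left _ hz
    set p := W₃.bypass with hpdef
    have hppath : p.IsPath := W₃.bypass_isPath
    have hpS1 : ∀ z ∈ p.support, z ≠ v1 → z ∉ w.support := by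
      intro z hz hzv
      have : z ∈ W₃.support := W₃.support_bypass_subset hz
      rw [W₃.support_eq_cons] at this
      rcases List.mem_cons.mp this with rfl | hzt
      · exact absurd rfl hzv
      · exact hW₃tail z hzt
    have hpS2 : ∀ z ∈ p.support, z ≠ v2 → z ∉ w'.support := by
      intro z hz hzv
      have : z ∈ W₃.support := W₃.support_bypass_subset hz
      rcases mem_support_cases W₃ this with rfl | hzt
      · exact absurd rfl hzv
      · exact hW₃off z hzt
    refine barbell_contra hsym hsign hF hfree (w.rotate _ hv1) (w'.rotate _ hv2) p
      (hw.rotate hv1) (hw'.rotate hv2) hppath ?_ ?_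
    · intro z hz hzv
      have hzS : z ∈ w.support := (mem_support_rotate hw.not_nil hv1).mp hz
      constructor
      · intro hzp
        exact hpS1 z hzp hzv hzS
      · intro hz2
        exact hshare z hzS ((mem_support_rotate hw'.not_nil hv2).mp hz2)
    · intro z hz hzv
      have hzS : z ∈ w'.support := (mem_support_rotate hw'.not_nil hv2).mp hz
      constructor
      · intro hzp
        exact hpS2 z hzp hzv hzS
      · intro hz2
        exact hshare z ((mem_support_rotate hw.not_nil hv1).mp hz2) hzS

/-- Part 2: cycles in the same component of ⟨F⟩ have the same edge sets. -/
lemma cycles_eq [LinearOrder (Sym2 V)] (hsym : ∀ u v, σ u v = σ v u)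
    (hsign : ∀ u v, G.Adj u v → σ u v = 1 ∨ σ u v = -1)
    {F : Finset (Sym2 V)} (hF : F ⊆ edgeFS G) (hfree : BCFree G σ F)
    (u u' : V) (w : (subOf F).Walk u u) (w' : (subOf F).Walk u' u')
    (hw : w.IsCycle) (hw' : w'.IsCycle) (hreach : (subOf F).Reachable u u') :
    w.edges.toFinset = w'.edges.toFinset := by
  apply Finset.Subset.antisymm
  · intro e he
    rw [List.mem_toFinset] at he ⊢
    exact cycle_edges_subset hsym hsign hF hfree u' u w' w hw' hw hreach.symm e he
  · intro e he
    rw [List.mem_toFinset] at he ⊢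
    exact cycle_edges_subset hsym hsign hF hfree u u' w w' hw hw' hreach e he
end Chunk5b
section Chunk6
open SimpleGraph Walk

variable {σ : V → V → ℤ} {G : SimpleGraph V}

lemma subOf_adj {F : Finset (Sym2 V)} {u v : V} :
    (subOf F).Adj u v ↔ s(u, v) ∈ F ∧ u ≠ v := by
  rw [subOf, SimpleGraph.fromEdgeSet_adj, Finset.mem_coe]

lemma subOf_mono {F' F : Finset (Sym2 V)} (h : F' ⊆ F) : subOf F' ≤ subOf F := by
  intro u v hadj
  rw [subOf_adj] at hadj ⊢
  exact ⟨h hadj.1, hadj.2⟩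

lemma reach_empty {u v : V} (h : (subOf (∅ : Finset (Sym2 V))).Reachable u v) : u = v := by
  rcases h with ⟨w⟩
  cases w with
  | nil => rfl
  | cons h p => rw [subOf_adj] at h; simp at h

lemma no_cycle_empty {u : V} (c : (subOf (∅ : Finset (Sym2 V))).Walk u u) : ¬c.IsCycle := by
  intro hc
  cases c with
  | nil => exact hc.ne_nil rfl
  | cons h p => rw [subOf_adj] at h; simp at h

lemma subOf_erase_eq {F : Finset (Sym2 V)} {e : Sym2 V} :
    subOf (F.erase e) = subOf F \ SimpleGraph.fromEdgeSet {e} := by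
  ext u v
  rw [subOf_adj, SimpleGraph.sdiff_adj, subOf_adj, SimpleGraph.fromEdgeSet_adj,
    Finset.mem_erase]
  constructor
  · rintro ⟨⟨hne, hmem⟩, huv⟩
    exact ⟨⟨hmem, huv⟩, fun h => hne h.1⟩
  · rintro ⟨⟨hmem, huv⟩, h⟩
    refine ⟨⟨fun heq => h ⟨heq, huv⟩, hmem⟩, huv⟩

lemma rep_unique {H : SimpleGraph V} {a b : V} (ha : IsCompRep H a) (hb : IsCompRep H b)
    (hr : H.Reachable a b) : a = b :=
  le_antisymm (ha b hr) (hb a hr.symm)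

lemma reach_of_mem_support {H : SimpleGraph V} {u v x : V} (w : H.Walk u v)
    (hx : x ∈ w.support) : H.Reachable u x := by
  classical
  exact ⟨w.takeUntil x hx⟩

/-- Replace a deleted edge by a detour. -/
lemma reach_erase {F : Finset (Sym2 V)} {x y : V}
    (hxy : (subOf (F.erase s(x, y))).Reachable x y) :
    ∀ {u v : V}, (subOf F).Reachable u v → (subOf (F.erase s(x, y))).Reachable u v := by
  intro u v h
  rcases h with ⟨w⟩
  induction w with
  | nil => exact Reachable.refl _
  | @cons a m b h p ih =>
    refine Reachable.trans ?_ ih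
    by_cases he : s(a, m) = s(x, y)
    · rw [Sym2.eq_iff] at he
      rcases he with ⟨rfl, rfl⟩ | ⟨rfl, rfl⟩
      · exact hxy
      · exact hxy.symm
    · rw [subOf_adj] at h
      exact SimpleGraph.Adj.reachable (by
        rw [subOf_adj, Finset.mem_erase]
        exact ⟨⟨he, h.1⟩, h.2⟩)

/-- A cycle avoiding `e` transfers to the erased graph. -/
lemma cycle_transfer_erase {F : Finset (Sym2 V)} (hF : F ⊆ edgeFS G) {e : Sym2 V} {u : V}
    (c : (subOf F).Walk u u) (hc : ∀ f ∈ c.edges, f ≠ e) :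
    ∀ f ∈ c.edges, f ∈ (subOf (F.erase e)).edgeSet := by
  intro f hf
  rw [subOf_edgeSet (Finset.Subset.trans (Finset.erase_subset _ _) hF), Finset.mem_coe,
    Finset.mem_erase]
  exact ⟨hc f hf, edges_subset_F hF c f hf⟩

end Chunk6
section Chunk7
open SimpleGraph Walk

variable {σ : V → V → ℤ} {G : SimpleGraph V}

lemma step_cycle [LinearOrder (Sym2 V)] (hsym : ∀ u v, σ u v = σ v u)
    (hsign : ∀ u v, G.Adj u v → σ u v = 1 ∨ σ u v = -1)
    {F : Finset (Sym2 V)} (hF : F ⊆ edgeFS G) (hfree : BCFree G σ F)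
    {x y u : V} {w : (subOf F).Walk u u} (hw : w.IsCycle) (he : s(x, y) ∈ w.edges) :
    (Finset.univ.filter fun v : V => IsCompRep (subOf (F.erase s(x, y))) v ∧
        BalancedCompAt (subOf (F.erase s(x, y))) σ v).card
      = (Finset.univ.filter fun v : V => IsCompRep (subOf F) v ∧
        BalancedCompAt (subOf F) σ v).card + 1 := by
  classical
  have hF' : F.erase s(x, y) ⊆ edgeFS G := (F.erase_subset _).trans hF
  have hmono : subOf (F.erase s(x, y)) ≤ subOf F := subOf_mono (F.erase_subset _)
  have hradj := (SimpleGraph.adj_and_reachable_delete_edges_iff_exists_cycle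
    (G := subOf F)).mpr ⟨u, w, hw, he⟩
  have hxy' : (subOf (F.erase s(x, y))).Reachable x y := by
    rw [subOf_erase_eq]; exact hradj.2
  have hiff : ∀ a b : V, (subOf F).Reachable a b ↔
      (subOf (F.erase s(x, y))).Reachable a b :=
    fun a b => ⟨reach_erase hxy', fun h => h.mono hmono⟩
  have hKne : (Finset.univ.filter fun z => (subOf F).Reachable x z).Nonempty :=
    ⟨x, Finset.mem_filter.mpr ⟨Finset.mem_univ x, Reachable.refl x⟩⟩
  set r := Finset.min' _ hKne with hrdef
  have hrK : (subOf F).Reachable x r := by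
    have := Finset.min'_mem _ hKne
    exact (Finset.mem_filter.mp this).2
  have hrrep : IsCompRep (subOf F) r := by
    intro z hz
    exact Finset.min'_le _ z (Finset.mem_filter.mpr ⟨Finset.mem_univ z, hrK.trans hz⟩)
  have hrrep' : IsCompRep (subOf (F.erase s(x, y))) r :=
    fun z hz => hrrep z ((hiff r z).mpr hz)
  have hux : (subOf F).Reachable u x :=
    reach_of_mem_support w (Walk.fst_mem_support_of_mem_edges w he)
  have hru : (subOf F).Reachable r u := hrK.symm.trans hux.symm
  have hnotbal : ¬ BalancedCompAt (subOf F) σ r := by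
    intro hb
    have h1 := hb u hru w hw
    have h2 := no_balanced_cycle hsym hsign hF hfree u w hw
    rw [h1] at h2
    norm_num at h2
  have hbal' : BalancedCompAt (subOf (F.erase s(x, y))) σ r := by
    intro z hz c hc
    exfalso
    have hcF : (c.mapLe hmono).IsCycle := hc.mapLe hmono
    have hzu : (subOf F).Reachable z u := ((hiff r z).mpr hz).symm.trans hru
    have heq := cycles_eq hsym hsign hF hfree z u (c.mapLe hmono) w hcF hw hzu
    have hmem : s(x, y) ∈ (c.mapLe hmono).edges.toFinset := by
      rw [heq]; exact List.mem_toFinset.mpr he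
    rw [List.mem_toFinset, edges_mapLe] at hmem
    have := edges_subset_F hF' c _ hmem
    simp at this
  have hsets : (Finset.univ.filter fun v : V => IsCompRep (subOf (F.erase s(x, y))) v ∧
        BalancedCompAt (subOf (F.erase s(x, y))) σ v)
      = insert r (Finset.univ.filter fun v : V => IsCompRep (subOf F) v ∧
        BalancedCompAt (subOf F) σ v) := by
    ext v
    simp only [Finset.mem_filter, Finset.mem_univ, true_and, Finset.mem_insert]
    constructor
    · rintro ⟨hrep', hbal'v⟩
      by_cases hvr : v = r
      · exact Or.inl hvr
      · right
        have hrepv : IsCompRep (subOf F) v := fun z hz => hrep' z ((hiff v z).mp hz)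
        refine ⟨hrepv, ?_⟩
        have hvnotx : ¬ (subOf F).Reachable x v := by
          intro hxv
          exact hvr (rep_unique hrepv hrrep (hxv.symm.trans hrK))
        intro z hz c hc
        have hce : ∀ f ∈ c.edges, f ≠ s(x, y) := by
          intro f hf hfe
          apply hvnotx
          subst hfe
          exact (hz.trans (reach_of_mem_support c
            (Walk.fst_mem_support_of_mem_edges c hf))).symm
        have hsub := cycle_transfer_erase hF c hce
        have hres := hbal'v z ((hiff v z).mp hz) (c.transfer _ hsub) (hc.transfer hsub)
        rwa [SGAux.walkSign_transfer] at hres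
    · rintro (rfl | ⟨hrep, hbal⟩)
      · exact ⟨hrrep', hbal'⟩
      · refine ⟨fun z hz => hrep z ((hiff _ z).mpr hz), ?_⟩
        intro z hz c hc
        have hres := hbal z ((hiff _ z).mpr hz) (c.mapLe hmono) (hc.mapLe hmono)
        rwa [SGAux.walkSign_mapLe] at hres
  have hrnot : r ∉ (Finset.univ.filter fun v : V => IsCompRep (subOf F) v ∧
      BalancedCompAt (subOf F) σ v) := by
    simp only [Finset.mem_filter, Finset.mem_univ, true_and]
    rintro ⟨-, hb⟩
    exact hnotbal hb
  rw [hsets, Finset.card_insert_of_notMem hrnot]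
end Chunk7
section Chunk8
open SimpleGraph Walk

variable {σ : V → V → ℤ} {G : SimpleGraph V}

lemma step_acyclic [LinearOrder (Sym2 V)] {F : Finset (Sym2 V)} (hF : F ⊆ edgeFS G)
    (hacyc : ∀ (u : V) (c : (subOf F).Walk u u), ¬c.IsCycle)
    {x y : V} (he : s(x, y) ∈ F) :
    (Finset.univ.filter fun v : V => IsCompRep (subOf (F.erase s(x, y))) v ∧
        BalancedCompAt (subOf (F.erase s(x, y))) σ v).card
      = (Finset.univ.filter fun v : V => IsCompRep (subOf F) v ∧
        BalancedCompAt (subOf F) σ v).card + 1 := by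
  classical
  have hF' : F.erase s(x, y) ⊆ edgeFS G := (F.erase_subset _).trans hF
  have hGadj : G.Adj x y := by
    have h1 : s(x, y) ∈ edgeFS G := hF he
    rw [edgeFS, Set.mem_toFinset, SimpleGraph.mem_edgeSet] at h1
    exact h1
  have hadj : (subOf F).Adj x y := subOf_adj.mpr ⟨he, hGadj.ne⟩
  have hmono : subOf (F.erase s(x, y)) ≤ subOf F := subOf_mono (F.erase_subset _)
  have hnxy : ¬ (subOf (F.erase s(x, y))).Reachable x y := by
    intro hr
    rcases hr with ⟨p⟩
    have hqpath : ((p.bypass).mapLe hmono).IsPath := (Walk.mapLe_isPath hmono).mpr p.bypass_isPath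
    apply hacyc y (Walk.cons hadj.symm ((p.bypass).mapLe hmono))
    rw [Walk.cons_isCycle_iff]
    refine ⟨hqpath, ?_⟩
    intro hmem
    rw [edges_mapLe] at hmem
    have h1 := edges_subset_F hF' p.bypass _ hmem
    rw [Sym2.eq_swap] at h1
    exact Finset.notMem_erase _ _ h1
  have hor : ∀ a b : V, (subOf F).Reachable a b →
      ((subOf (F.erase s(x, y))).Reachable a b ∨
       ((subOf (F.erase s(x, y))).Reachable a x ∧ (subOf (F.erase s(x, y))).Reachable y b) ∨
       ((subOf (F.erase s(x, y))).Reachable a y ∧ (subOf (F.erase s(x, y))).Reachable x b)) := by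
    intro a b h
    rcases h with ⟨W⟩
    induction W with
    | nil => exact Or.inl (Reachable.refl _)
    | @cons a m b h p ih =>
      by_cases hed : s(a, m) = s(x, y)
      · rw [Sym2.eq_iff] at hed
        rcases hed with ⟨rfl, rfl⟩ | ⟨rfl, rfl⟩
        · rcases ih with h1 | ⟨h2a, h2b⟩ | ⟨h3a, h3b⟩
          · exact Or.inr (Or.inl ⟨Reachable.refl _, h1⟩)
          · exact absurd h2a.symm hnxy
          · exact Or.inl h3b
        · rcases ih with h1 | ⟨h2a, h2b⟩ | ⟨h3a, h3b⟩
          · exact Or.inr (Or.inr ⟨Reachable.refl _, h1⟩)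
          · exact Or.inl h2b
          · exact absurd h3a hnxy
      · have h' : (subOf (F.erase s(x, y))).Adj a m := by
          rw [subOf_adj] at h ⊢
          exact ⟨Finset.mem_erase.mpr ⟨hed, h.1⟩, h.2⟩
        rcases ih with h1 | ⟨h2a, h2b⟩ | ⟨h3a, h3b⟩
        · exact Or.inl (h'.reachable.trans h1)
        · exact Or.inr (Or.inl ⟨h'.reachable.trans h2a, h2b⟩)
        · exact Or.inr (Or.inr ⟨h'.reachable.trans h3a, h3b⟩)
  have hKxne : (Finset.univ.filter fun z =>
      (subOf (F.erase s(x, y))).Reachable x z).Nonempty :=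
    ⟨x, Finset.mem_filter.mpr ⟨Finset.mem_univ x, Reachable.refl x⟩⟩
  have hKyne : (Finset.univ.filter fun z =>
      (subOf (F.erase s(x, y))).Reachable y z).Nonempty :=
    ⟨y, Finset.mem_filter.mpr ⟨Finset.mem_univ y, Reachable.refl y⟩⟩
  set rx := Finset.min' _ hKxne with hrxdef
  set ry := Finset.min' _ hKyne with hrydef
  have hrxK : (subOf (F.erase s(x, y))).Reachable x rx :=
    (Finset.mem_filter.mp (Finset.min'_mem _ hKxne)).2
  have hryK : (subOf (F.erase s(x, y))).Reachable y ry :=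
    (Finset.mem_filter.mp (Finset.min'_mem _ hKyne)).2
  have hrxrep' : IsCompRep (subOf (F.erase s(x, y))) rx := by
    intro z hz
    exact Finset.min'_le _ z (Finset.mem_filter.mpr ⟨Finset.mem_univ z, hrxK.trans hz⟩)
  have hryrep' : IsCompRep (subOf (F.erase s(x, y))) ry := by
    intro z hz
    exact Finset.min'_le _ z (Finset.mem_filter.mpr ⟨Finset.mem_univ z, hryK.trans hz⟩)
  have hrxy : rx ≠ ry := by
    intro hh
    exact hnxy (hrxK.trans (hh ▸ hryK.symm))
  have hbalF : ∀ v, BalancedCompAt (subOf F) σ v :=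
    fun v z hz c hc => absurd hc (hacyc _ c)
  have hbalF' : ∀ v, BalancedCompAt (subOf (F.erase s(x, y))) σ v :=
    fun v z hz c hc => absurd (hc.mapLe hmono) (hacyc _ _)
  have hminrep : IsCompRep (subOf F) (min rx ry) := by
    intro z hz
    have hsplit : (subOf F).Reachable rx z ∨ (subOf F).Reachable ry z := by
      rcases le_total rx ry with h | h
      · left; rwa [min_eq_left h] at hz
      · right; rwa [min_eq_right h] at hz
    have hgoal : rx ≤ z ∨ ry ≤ z → min rx ry ≤ z := fun h =>
      h.elim (le_trans (min_le_left _ _)) (le_trans (min_le_right _ _))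
    apply hgoal
    rcases hsplit with hz' | hz'
    · rcases hor rx z hz' with h1 | ⟨h2a, h2b⟩ | ⟨h3a, h3b⟩
      · exact Or.inl (hrxrep' z h1)
      · exact Or.inr (hryrep' z (hryK.symm.trans h2b))
      · exact absurd (hrxK.trans h3a) hnxy
    · rcases hor ry z hz' with h1 | ⟨h2a, h2b⟩ | ⟨h3a, h3b⟩
      · exact Or.inr (hryrep' z h1)
      · exact absurd (h2a.symm.trans hryK.symm) hnxy
      · exact Or.inl (hrxrep' z (hrxK.symm.trans h3b))
  have hrepmax : IsCompRep (subOf (F.erase s(x, y))) (max rx ry) := by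
    rcases le_total rx ry with h | h
    · rwa [max_eq_right h]
    · rwa [max_eq_left h]
  have hreachF_rxry : (subOf F).Reachable rx ry :=
    ((hrxK.mono hmono).symm.trans (hadj.reachable.trans (hryK.mono hmono)))
  have hmaxnotrep : ¬ IsCompRep (subOf F) (max rx ry) := by
    intro hmax
    have heqmm : min rx ry = max rx ry := by
      apply rep_unique hminrep hmax
      rcases le_total rx ry with h | h
      · rw [min_eq_left h, max_eq_right h]; exact hreachF_rxry
      · rw [min_eq_right h, max_eq_left h]; exact hreachF_rxry.symm
    rcases le_total rx ry with h | h
    · rw [min_eq_left h, max_eq_right h] at heqmm; exact hrxy heqmm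
    · rw [min_eq_right h, max_eq_left h] at heqmm; exact hrxy heqmm.symm
  have hsets : (Finset.univ.filter fun v : V => IsCompRep (subOf (F.erase s(x, y))) v ∧
        BalancedCompAt (subOf (F.erase s(x, y))) σ v)
      = insert (max rx ry) (Finset.univ.filter fun v : V => IsCompRep (subOf F) v ∧
        BalancedCompAt (subOf F) σ v) := by
    ext v
    simp only [Finset.mem_filter, Finset.mem_univ, true_and, Finset.mem_insert]
    constructor
    · rintro ⟨hrep', -⟩
      by_cases hrepF : IsCompRep (subOf F) v
      · exact Or.inr ⟨hrepF, hbalF v⟩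
      · left
        rw [IsCompRep] at hrepF
        push_neg at hrepF
        obtain ⟨z, hz, hlt⟩ := hrepF
        have hvxy : v = rx ∨ v = ry := by
          rcases hor v z hz with h1 | ⟨h2a, h2b⟩ | ⟨h3a, h3b⟩
          · exact absurd (hrep' z h1) (not_le.mpr hlt)
          · exact Or.inl (rep_unique hrep' hrxrep' (h2a.trans hrxK))
          · exact Or.inr (rep_unique hrep' hryrep' (h3a.trans hryK))
        have hvne_min : v ≠ min rx ry := by
          intro hh
          subst hh
          exact (not_le.mpr hlt) (hminrep z hz)
        rcases le_total rx ry with h | h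
        · rcases hvxy with rfl | rfl
          · exact absurd (min_eq_left h).symm hvne_min
          · rw [max_eq_right h]
        · rcases hvxy with rfl | rfl
          · rw [max_eq_left h]
          · exact absurd (min_eq_right h).symm hvne_min
    · rintro (rfl | ⟨hrep, -⟩)
      · exact ⟨hrepmax, hbalF' _⟩
      · exact ⟨fun z hz => hrep z (hz.mono hmono), hbalF' _⟩
  have hmaxnot : (max rx ry) ∉ (Finset.univ.filter fun v : V => IsCompRep (subOf F) v ∧
      BalancedCompAt (subOf F) σ v) := by
    simp only [Finset.mem_filter, Finset.mem_univ, true_and]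
    rintro ⟨hmax, -⟩
    exact hmaxnotrep hmax
  rw [hsets, Finset.card_insert_of_notMem hmaxnot]
end Chunk8
section Chunk9
open SimpleGraph Walk

variable {σ : V → V → ℤ} {G : SimpleGraph V}

lemma count_key [LinearOrder (Sym2 V)] (hsym : ∀ u v, σ u v = σ v u)
    (hsign : ∀ u v, G.Adj u v → σ u v = 1 ∨ σ u v = -1) :
    ∀ F : Finset (Sym2 V), F ⊆ edgeFS G → BCFree G σ F →
    (Finset.univ.filter fun v : V => IsCompRep (subOf F) v ∧
      BalancedCompAt (subOf F) σ v).card + F.card = Fintype.card V := by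
  classical
  intro F
  induction F using Finset.strongInduction with
  | _ F ih =>
    intro hF hfree
    by_cases hFne : F = ∅
    · subst hFne
      have hall : ∀ v : V, IsCompRep (subOf (∅ : Finset (Sym2 V))) v ∧
          BalancedCompAt (subOf (∅ : Finset (Sym2 V))) σ v := fun v =>
        ⟨fun z hz => le_of_eq (reach_empty hz),
         fun z _ c hc => absurd hc (no_cycle_empty c)⟩
      rw [Finset.filter_true_of_mem (fun v _ => hall v)]
      simp [Finset.card_univ]
    · by_cases hcyc : ∃ (u : V) (c : (subOf F).Walk u u), c.IsCycle
      · obtain ⟨u, c, hc⟩ := hcyc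
        obtain ⟨e, he⟩ := List.exists_mem_of_ne_nil _ (cycle_edges_ne_nil hc)
        induction e using Sym2.ind with
        | _ x y =>
        have hexyF : s(x, y) ∈ F := edges_subset_F hF c _ he
        have hstep := step_cycle hsym hsign hF hfree hc he
        have hnext := ih (F.erase s(x, y)) (Finset.erase_ssubset hexyF)
          ((F.erase_subset _).trans hF)
          (fun B hB hsub => hfree B hB (hsub.trans (F.erase_subset _)))
        have hcard := Finset.card_erase_add_one hexyF
        omega
      · push_neg at hcyc
        obtain ⟨e, he⟩ := Finset.nonempty_iff_ne_empty.mpr hFne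
        induction e using Sym2.ind with
        | _ x y =>
        have hstep := step_acyclic (σ := σ) hF hcyc he
        have hnext := ih (F.erase s(x, y)) (Finset.erase_ssubset he)
          ((F.erase_subset _).trans hF)
          (fun B hB hsub => hfree B hB (hsub.trans (F.erase_subset _)))
        have hcard := Finset.card_erase_add_one he
        omega
end Chunk9

/-- If `F` contains no broken circuit, then every cycle in `⟨F⟩` is unbalanced, any
two cycles in the same component coincide (so each component is a tree or unicyclic
with an unbalanced cycle), `|F| ≤ n`, and the number of balanced components is
`n − |F|`. -/
theorem stmt_9 [LinearOrder (Sym2 V)] (G : SimpleGraph V) (σ : V → V → ℤ)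
    (hsym : ∀ u v, σ u v = σ v u)
    (hsign : ∀ u v, G.Adj u v → σ u v = 1 ∨ σ u v = -1)
    (F : Finset (Sym2 V)) (hF : F ⊆ edgeFS G) (hfree : BCFree G σ F) :
    (∀ (u : V) (w : (subOf F).Walk u u), w.IsCycle → walkSign σ w = -1) ∧
    (∀ (u u' : V) (w : (subOf F).Walk u u) (w' : (subOf F).Walk u' u'),
      w.IsCycle → w'.IsCycle → (subOf F).Reachable u u' →
      w.edges.toFinset = w'.edges.toFinset) ∧
    F.card ≤ Fintype.card V ∧
    (Finset.univ.filter fun v : V =>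
        IsCompRep (subOf F) v ∧ BalancedCompAt (subOf F) σ v).card
      = Fintype.card V - F.card := by
  have hk := count_key hsym hsign F hF hfree
  exact ⟨no_balanced_cycle hsym hsign hF hfree,
    fun u u' w w' hw hw' hr => cycles_eq hsym hsign hF hfree u u' w w' hw hw' hr,
    by omega, by omega⟩
end

section
/- Let T₁', …, T_s' be vertex-disjoint trees with vertex sets partitioning an n-element set (so ∑|V(T_j')| with s components and total edges n − s), and let L' be a k-assignment on the vertices. Then k^s − ∏_{j=1}^{s} |⋂_{v ∈ V(T_j')} L'(v)| ≤ k^{s−1} ∑_{j=1}^{s} ∑_{uv ∈ E(T_j')} (k − |L'(u) ∩ L'(v)|). -/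
open scoped Classical

variable {V : Type} [Fintype V] [LinearOrder V]

/-! ### Auxiliary definitions and lemmas for `stmt_15` -/

/-- The list elements common to the whole component of `v`. -/
noncomputable def Sfin15 (H : SimpleGraph V) (L' : V → Finset ℤ) (v : V) : Finset ℤ :=
  (L' v).filter fun a => ∀ u, H.Reachable v u → a ∈ L' u

/-- Oriented difference set for an edge, oriented away from `v`. -/
noncomputable def Dor15 (H : SimpleGraph V) (L' : V → Finset ℤ) (v : V) : Sym2 V → Finset ℤ :=
  Sym2.lift ⟨fun x y =>
    if H.dist v x < H.dist v y then L' x \ L' y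
    else if H.dist v y < H.dist v x then L' y \ L' x else ∅,
    fun x y => by dsimp only; split_ifs <;> first | rfl | omega⟩

/-- The edges of the component of `v`. -/
noncomputable def compEdges15 (H : SimpleGraph V) (v : V) : Finset (Sym2 V) :=
  (edgeFS H).filter fun e => ∃ x ∈ e, H.Reachable v x

lemma exists_pred15 (H : SimpleGraph V) {v u : V} (hr : H.Reachable v u) (hne : v ≠ u) :
    ∃ y, H.Adj y u ∧ H.dist v y + 1 = H.dist v u := by
  obtain ⟨p, hp⟩ := hr.exists_walk_length_eq_dist
  obtain ⟨y, hadj, q, hq⟩ := SimpleGraph.Walk.exists_eq_cons_of_ne (Ne.symm hne) p.reverse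
  refine ⟨y, hadj.symm, ?_⟩
  have h1 : H.dist v y ≤ q.reverse.length := SimpleGraph.dist_le _
  have hlen : p.reverse.length = q.length + 1 := by rw [hq]; simp
  rw [SimpleGraph.Walk.length_reverse] at h1 hlen
  obtain ⟨w2, hw2⟩ := (q.reverse.reachable).exists_walk_length_eq_dist
  have h2 : H.dist v u ≤ w2.length + 1 := by
    have := SimpleGraph.dist_le (w2.concat hadj.symm)
    simpa using this
  omega

lemma cover15 (H : SimpleGraph V) (L' : V → Finset ℤ) (v : V) {a : ℤ} :
    ∀ n (u : V), H.dist v u = n → H.Reachable v u → a ∈ L' v → a ∉ L' u →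
      ∃ e ∈ compEdges15 H v, a ∈ Dor15 H L' v e := by
  intro n
  induction n using Nat.strong_induction_on with
  | _ n ih =>
    intro u hd hr hav hau
    have hne : v ≠ u := by rintro rfl; exact hau hav
    obtain ⟨y, hadj, hdy⟩ := exists_pred15 H hr hne
    have hry : H.Reachable v y := hr.trans hadj.symm.reachable
    by_cases hay : a ∈ L' y
    · refine ⟨s(y, u), ?_, ?_⟩
      · simp only [compEdges15, Finset.mem_filter, edgeFS, Set.mem_toFinset,
          SimpleGraph.mem_edgeSet]
        exact ⟨hadj, ⟨y, by simp, hry⟩⟩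
      · have hlt : H.dist v y < H.dist v u := by omega
        simp only [Dor15, Sym2.lift_mk]
        rw [if_pos hlt]
        exact Finset.mem_sdiff.2 ⟨hay, hau⟩
    · exact ih (H.dist v y) (by omega) y rfl hry hav hay

lemma card_Dor15 (H : SimpleGraph V) (L' : V → Finset ℤ) (k : ℕ)
    (hL : ∀ v, (L' v).card = k) (v : V) (e : Sym2 V) :
    ((Dor15 H L' v e).card : ℤ) ≤
      Sym2.lift ⟨fun u u' => (k : ℤ) - ((L' u ∩ L' u').card : ℤ),
        fun u u' => by simp [Finset.inter_comm]⟩ e := by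
  induction e using Sym2.ind with
  | _ x y =>
    simp only [Dor15, Sym2.lift_mk]
    split_ifs with h1 h2
    · have := Finset.card_inter_add_card_sdiff (L' x) (L' y)
      have hx := hL x
      omega
    · have := Finset.card_inter_add_card_sdiff (L' y) (L' x)
      have hy := hL y
      rw [Finset.inter_comm] at this
      omega
    · have h3 : (L' x ∩ L' y).card ≤ k := by
        rw [← hL x]; exact Finset.card_le_card Finset.inter_subset_left
      simp only [Finset.card_empty, Nat.cast_zero]
      omega

lemma wt_nonneg15 (L' : V → Finset ℤ) (k : ℕ) (hL : ∀ v, (L' v).card = k) (e : Sym2 V) :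
    0 ≤ Sym2.lift ⟨fun u u' => (k : ℤ) - ((L' u ∩ L' u').card : ℤ),
        fun u u' => by simp [Finset.inter_comm]⟩ e := by
  induction e using Sym2.ind with
  | _ x y =>
    simp only [Sym2.lift_mk, sub_nonneg]
    have h3 : (L' x ∩ L' y).card ≤ k := by
      rw [← hL x]; exact Finset.card_le_card Finset.inter_subset_left
    exact_mod_cast h3

lemma comp15 (H : SimpleGraph V) (L' : V → Finset ℤ) (k : ℕ)
    (hL : ∀ v, (L' v).card = k) (v : V) :
    (k : ℤ) - ((Sfin15 H L' v).card : ℤ) ≤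
      ∑ e ∈ compEdges15 H v,
        Sym2.lift ⟨fun u u' => (k : ℤ) - ((L' u ∩ L' u').card : ℤ),
          fun u u' => by simp [Finset.inter_comm]⟩ e := by
  have hss : Sfin15 H L' v ⊆ L' v := Finset.filter_subset _ _
  have hsub : L' v \ Sfin15 H L' v ⊆ (compEdges15 H v).biUnion (Dor15 H L' v) := by
    intro a ha
    rw [Finset.mem_sdiff] at ha
    obtain ⟨hav, hnotS⟩ := ha
    simp only [Sfin15, Finset.mem_filter, not_and, not_forall] at hnotS
    obtain ⟨u, hru, hau⟩ := hnotS hav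
    obtain ⟨e, he, hae⟩ := cover15 H L' v _ u rfl hru hav hau
    exact Finset.mem_biUnion.2 ⟨e, he, hae⟩
  calc (k : ℤ) - ((Sfin15 H L' v).card : ℤ)
      = ((L' v \ Sfin15 H L' v).card : ℤ) := by
        have h1 : (Sfin15 H L' v).card ≤ (L' v).card := Finset.card_le_card hss
        have h2 := Finset.card_sdiff_of_subset hss
        have h3 := hL v
        omega
    _ ≤ (((compEdges15 H v).biUnion (Dor15 H L' v)).card : ℤ) := by
        exact_mod_cast Finset.card_le_card hsub
    _ ≤ ∑ e ∈ compEdges15 H v, ((Dor15 H L' v e).card : ℤ) := by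
        exact_mod_cast Finset.card_biUnion_le
    _ ≤ _ := Finset.sum_le_sum fun e _ => card_Dor15 H L' k hL v e

lemma prod15 (k : ℕ) (b : V → ℤ) (T : Finset V) (hb : ∀ v ∈ T, 0 ≤ b v ∧ b v ≤ (k : ℤ)) :
    (k : ℤ) ^ T.card - ∏ v ∈ T, b v ≤ (k : ℤ) ^ (T.card - 1) * ∑ v ∈ T, ((k : ℤ) - b v) := by
  induction T using Finset.induction_on with
  | empty => simp
  | insert a T ha ih =>
    have hbT : ∀ v ∈ T, 0 ≤ b v ∧ b v ≤ (k : ℤ) := fun v hv => hb v (Finset.mem_insert_of_mem hv)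
    have hba := hb a (Finset.mem_insert_self a T)
    have ih' := ih hbT
    have hP0 : 0 ≤ ∏ v ∈ T, b v := Finset.prod_nonneg fun v hv => (hbT v hv).1
    have hPle : ∏ v ∈ T, b v ≤ (k : ℤ) ^ T.card := by
      rw [← Finset.prod_const]
      exact Finset.prod_le_prod (fun v hv => (hbT v hv).1) (fun v hv => (hbT v hv).2)
    rw [Finset.card_insert_of_notMem ha, Finset.prod_insert ha, Finset.sum_insert ha]
    rcases Finset.eq_empty_or_nonempty T with rfl | hTne
    · simp
    · have hc : 1 ≤ T.card := Finset.Nonempty.card_pos hTne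
      have hkc : (k : ℤ) * (k : ℤ) ^ (T.card - 1) = (k : ℤ) ^ T.card := by
        rw [← pow_succ']
        congr 1
        omega
      have hexp : T.card + 1 - 1 = T.card := by omega
      rw [hexp]
      calc (k : ℤ) ^ (T.card + 1) - b a * ∏ v ∈ T, b v
          = (k : ℤ) * ((k : ℤ) ^ T.card - ∏ v ∈ T, b v)
            + ((k : ℤ) - b a) * ∏ v ∈ T, b v := by ring
        _ ≤ (k : ℤ) * ((k : ℤ) ^ (T.card - 1) * ∑ v ∈ T, ((k : ℤ) - b v))
            + ((k : ℤ) - b a) * (k : ℤ) ^ T.card := by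
            refine add_le_add ?_ ?_
            · exact mul_le_mul_of_nonneg_left ih' (by positivity)
            · exact mul_le_mul_of_nonneg_left hPle (by linarith [hba.2])
        _ = (k : ℤ) ^ T.card * (((k : ℤ) - b a) + ∑ v ∈ T, ((k : ℤ) - b v)) := by
            rw [← mul_assoc, hkc]; ring

lemma edge_reachable15 (H : SimpleGraph V) {e : Sym2 V} (he : e ∈ edgeFS H)
    {x y : V} (hx : x ∈ e) (hy : y ∈ e) : H.Reachable x y := by
  induction e using Sym2.ind with
  | _ a b =>
    simp only [edgeFS, Set.mem_toFinset, SimpleGraph.mem_edgeSet] at he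
    rw [Sym2.mem_iff] at hx hy
    rcases hx with rfl | rfl <;> rcases hy with rfl | rfl
    · exact SimpleGraph.Reachable.refl _
    · exact he.reachable
    · exact he.symm.reachable
    · exact SimpleGraph.Reachable.refl _

/-- For a forest with `s` components and `k`-lists,
`k^s − ∏_j |⋂_{v ∈ T_j} L'(v)| ≤ k^{s−1} ∑_{uv ∈ E} (k − |L'(u) ∩ L'(v)|)`. -/
theorem stmt_15 (H : SimpleGraph V) (k : ℕ) (L' : V → Finset ℤ)
    (hforest : ∀ (v : V) (w : H.Walk v v), ¬ w.IsCycle)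
    (hL : ∀ v, (L' v).card = k) :
    (k : ℤ) ^ (Finset.univ.filter fun v : V => IsCompRep H v).card -
      ∏ v ∈ Finset.univ.filter (fun v : V => IsCompRep H v),
        (Set.ncard {a : ℤ | ∀ u, H.Reachable v u → a ∈ L' u} : ℤ) ≤
    (k : ℤ) ^ ((Finset.univ.filter fun v : V => IsCompRep H v).card - 1) *
      ∑ e ∈ edgeFS H,
        Sym2.lift ⟨fun u u' => (k : ℤ) - ((L' u ∩ L' u').card : ℤ),
          fun u u' => by simp [Finset.inter_comm]⟩ e := by
  classical
  set R : Finset V := Finset.univ.filter fun v : V => IsCompRep H v with hR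
  set wt : Sym2 V → ℤ := fun e =>
    Sym2.lift ⟨fun u u' => (k : ℤ) - ((L' u ∩ L' u').card : ℤ),
      fun u u' => by simp [Finset.inter_comm]⟩ e with hwt
  have hset : ∀ v : V, {a : ℤ | ∀ u, H.Reachable v u → a ∈ L' u} = ↑(Sfin15 H L' v) := by
    intro v
    ext a
    simp only [Set.mem_setOf_eq, Finset.coe_filter, Sfin15, Finset.mem_coe, Finset.mem_filter]
    exact ⟨fun h => ⟨h v (SimpleGraph.Reachable.refl v), h⟩, fun h => h.2⟩
  have hprodeq : ∏ v ∈ R, (Set.ncard {a : ℤ | ∀ u, H.Reachable v u → a ∈ L' u} : ℤ)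
      = ∏ v ∈ R, ((Sfin15 H L' v).card : ℤ) := by
    refine Finset.prod_congr rfl fun v _ => ?_
    rw [hset v, Set.ncard_coe_finset]
  have hb : ∀ v ∈ R, 0 ≤ ((Sfin15 H L' v).card : ℤ) ∧ ((Sfin15 H L' v).card : ℤ) ≤ (k : ℤ) := by
    intro v _
    refine ⟨Int.natCast_nonneg _, ?_⟩
    have : (Sfin15 H L' v).card ≤ (L' v).card :=
      Finset.card_le_card (Finset.filter_subset _ _)
    rw [hL v] at this
    exact_mod_cast this
  have hdisj : (↑R : Set V).PairwiseDisjoint (compEdges15 H) := by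
    intro v1 h1 v2 h2 hne
    simp only [hR, Finset.coe_filter, Set.mem_setOf_eq, Finset.mem_univ, true_and] at h1 h2
    simp only [Function.onFun]
    rw [Finset.disjoint_left]
    intro e he1 he2
    simp only [compEdges15, Finset.mem_filter] at he1 he2
    obtain ⟨heE, x1, hx1, hr1⟩ := he1
    obtain ⟨_, x2, hx2, hr2⟩ := he2
    have hr12 : H.Reachable v1 v2 := (hr1.trans (edge_reachable15 H heE hx1 hx2)).trans hr2.symm
    exact hne (le_antisymm (h1 v2 hr12) (h2 v1 hr12.symm))
  have hsub : R.biUnion (compEdges15 H) ⊆ edgeFS H := by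
    intro e he
    obtain ⟨v, _, hev⟩ := Finset.mem_biUnion.1 he
    exact (Finset.mem_filter.1 hev).1
  calc (k : ℤ) ^ R.card - ∏ v ∈ R, (Set.ncard {a : ℤ | ∀ u, H.Reachable v u → a ∈ L' u} : ℤ)
      = (k : ℤ) ^ R.card - ∏ v ∈ R, ((Sfin15 H L' v).card : ℤ) := by rw [hprodeq]
    _ ≤ (k : ℤ) ^ (R.card - 1) * ∑ v ∈ R, ((k : ℤ) - ((Sfin15 H L' v).card : ℤ)) :=
        prod15 k _ R hb
    _ ≤ (k : ℤ) ^ (R.card - 1) * ∑ e ∈ edgeFS H, wt e := by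
        refine mul_le_mul_of_nonneg_left ?_ (by positivity)
        calc ∑ v ∈ R, ((k : ℤ) - ((Sfin15 H L' v).card : ℤ))
            ≤ ∑ v ∈ R, ∑ e ∈ compEdges15 H v, wt e :=
              Finset.sum_le_sum fun v _ => comp15 H L' k hL v
          _ = ∑ e ∈ R.biUnion (compEdges15 H), wt e := (Finset.sum_biUnion hdisj).symm
          _ ≤ ∑ e ∈ edgeFS H, wt e :=
              Finset.sum_le_sum_of_subset_of_nonneg hsub
                fun e _ _ => wt_nonneg15 L' k hL e
end
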